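/- arXiv:2105.04784 — 6 statements merged into one kernel-verified Lean document; each statement's English description precedes it below -/
import Mathlib

section
/- Let q be a prime power and f ∈ F_q[x,y] a polynomial of total degree at most q-1 that vanishes at every point (a,b) ∈ F_q² with ab ≠ 0. Then there exist α, β ∈ F_q such that f(x,y) = α(x^(q-1) - 1) + β(y^(q-1) - 1). -/
open MvPolynomial


lemma aux_zero {F : Type*} [Field F] [Fintype F] (p : Polynomial F)
    (hdeg : p.natDegree < Fintype.card F - 1)
    (h : ∀ a : F, a ≠ 0 → p.eval a = 0) : p = 0 := by
  classical
  apply Polynomial.eq_zero_of_natDegree_lt_card_of_eval_eq_zero' p (Finset.univ.erase 0)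
  · intro i hi; exact h i (Finset.mem_erase.mp hi).1
  · rwa [Finset.card_erase_of_mem (Finset.mem_univ 0), Finset.card_univ]

lemma aux_form {F : Type*} [Field F] [Fintype F] {q : ℕ} (hq : Fintype.card F = q)
    (hq2 : 2 ≤ q) (p : Polynomial F) (hdeg : p.natDegree ≤ q - 1)
    (h : ∀ a : F, a ≠ 0 → p.eval a = 0) :
    p = Polynomial.C (p.coeff (q - 1)) * (Polynomial.X ^ (q - 1) - 1) := by
  set n := q - 1 with hn
  have hn1 : 1 ≤ n := by omega
  set c := p.coeff n with hc
  have key : p - Polynomial.C c * (Polynomial.X ^ n - 1) = 0 := by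
    refine aux_zero _ ?_ ?_
    · have hle : (p - Polynomial.C c * (Polynomial.X ^ n - 1)).natDegree ≤ n - 1 := by
        rw [Polynomial.natDegree_le_iff_coeff_eq_zero]
        intro m hm
        have hm' : n ≤ m := by omega
        rw [Polynomial.coeff_sub, mul_sub, Polynomial.coeff_sub, mul_one,
          Polynomial.coeff_C_mul, Polynomial.coeff_X_pow, Polynomial.coeff_C]
        rcases eq_or_lt_of_le hm' with h1 | h1
        · subst h1
          have hne : n ≠ 0 := by omega
          simp [hc, hne]
        · have h2 : p.coeff m = 0 :=
            Polynomial.coeff_eq_zero_of_natDegree_lt (lt_of_le_of_lt hdeg h1)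
          have h3 : m ≠ n := by omega
          have h4 : m ≠ 0 := by omega
          simp [h2, if_neg h3, h4]
      rw [hq]
      omega
    · intro a ha
      have h1 : a ^ n = 1 := by
        rw [hn, ← hq]; exact FiniteField.pow_card_sub_one_eq_one a ha
      simp [h a ha, h1]
  exact sub_eq_zero.mp key

lemma aevalFin2_eq {F : Type*} [CommSemiring F] (f : MvPolynomial (Fin 2) F)
    (g0 g1 : Polynomial F) :
    MvPolynomial.aeval (fun i : Fin 2 => if i = 0 then g0 else g1) f
      = ∑ d ∈ f.support, Polynomial.C (coeff d f) * (g0 ^ d 0 * g1 ^ d 1) := by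
  rw [MvPolynomial.aeval_def, eval₂_eq']
  refine Finset.sum_congr rfl fun d _ => ?_
  rw [Fin.prod_univ_two]
  simp [Polynomial.algebraMap_eq]

lemma evalFin2 {F : Type*} [CommSemiring F] (f : MvPolynomial (Fin 2) F)
    (g0 g1 : Polynomial F) (a : F) :
    Polynomial.eval a (MvPolynomial.aeval (fun i : Fin 2 => if i = 0 then g0 else g1) f)
      = eval (fun i : Fin 2 => if i = 0 then g0.eval a else g1.eval a) f := by
  rw [aevalFin2_eq, eval_eq', Polynomial.eval_finset_sum]
  refine Finset.sum_congr rfl fun d _ => ?_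
  rw [Fin.prod_univ_two]
  simp

lemma natDegree_aevalFin2_le {F : Type*} [CommSemiring F] (f : MvPolynomial (Fin 2) F)
    (g0 g1 : Polynomial F) (h0 : g0.natDegree ≤ 1) (h1 : g1.natDegree ≤ 1) :
    (MvPolynomial.aeval (fun i : Fin 2 => if i = 0 then g0 else g1) f).natDegree
      ≤ f.totalDegree := by
  rw [aevalFin2_eq]
  apply Polynomial.natDegree_sum_le_of_forall_le
  intro d hd
  calc (Polynomial.C (coeff d f) * (g0 ^ d 0 * g1 ^ d 1)).natDegree
      ≤ (g0 ^ d 0 * g1 ^ d 1).natDegree := Polynomial.natDegree_C_mul_le _ _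
    _ ≤ (g0 ^ d 0).natDegree + (g1 ^ d 1).natDegree := Polynomial.natDegree_mul_le
    _ ≤ d 0 * g0.natDegree + d 1 * g1.natDegree :=
        add_le_add (Polynomial.natDegree_pow_le) (Polynomial.natDegree_pow_le)
    _ ≤ d 0 * 1 + d 1 * 1 :=
        add_le_add (Nat.mul_le_mul_left _ h0) (Nat.mul_le_mul_left _ h1)
    _ = d 0 + d 1 := by ring
    _ ≤ f.totalDegree := by
        have hsum : (d.sum fun _ e => e) = d 0 + d 1 := by
          rw [Finsupp.sum_fintype _ _ (fun _ => rfl), Fin.sum_univ_two]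
        rw [← hsum]
        exact le_totalDegree hd

lemma dsum_fin2 {d : Fin 2 →₀ ℕ} : (d.sum fun _ e => e) = d 0 + d 1 := by
  rw [Finsupp.sum_fintype _ _ (fun _ => rfl), Fin.sum_univ_two]

lemma coeff_aevalFin2_XC {F : Type*} [CommRing F] (f : MvPolynomial (Fin 2) F)
    {q : ℕ} (hdeg : f.totalDegree ≤ q - 1) (hq2 : 2 ≤ q) (b : F) :
    (MvPolynomial.aeval
        (fun i : Fin 2 => if i = 0 then (Polynomial.X : Polynomial F) else Polynomial.C b) f).coeff
        (q - 1)
      = coeff (Finsupp.single 0 (q - 1)) f := by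
  classical
  set n := q - 1 with hn
  have hn1 : 1 ≤ n := by omega
  rw [aevalFin2_eq, Polynomial.finset_sum_coeff]
  have hterm : ∀ d ∈ f.support,
      (Polynomial.C (coeff d f) * (Polynomial.X ^ d 0 * Polynomial.C b ^ d 1)).coeff n
        = if d = Finsupp.single 0 n then coeff d f else 0 := by
    intro d hd
    have hre : Polynomial.C (coeff d f) * (Polynomial.X ^ d 0 * Polynomial.C b ^ d 1)
        = Polynomial.C (coeff d f * b ^ d 1) * Polynomial.X ^ d 0 := by
      rw [← Polynomial.C_pow, map_mul]; ring
    rw [hre, Polynomial.coeff_C_mul, Polynomial.coeff_X_pow]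
    by_cases hd0 : d 0 = n
    · have hle : d 0 + d 1 ≤ n := by
        rw [← dsum_fin2]; exact le_trans (le_totalDegree hd) hdeg
      have hd1 : d 1 = 0 := by omega
      have hdeq : d = Finsupp.single 0 n := by
        ext i
        fin_cases i
        · simpa using hd0
        · simpa [Finsupp.single_apply] using hd1
      simp [hdeq, Finsupp.single_apply, hd1]
    · have hne : d ≠ Finsupp.single 0 n := by
        intro h; apply hd0; rw [h]; simp
      have : ¬ (n = d 0) := fun h => hd0 h.symm
      simp [this, hne]
  rw [Finset.sum_congr rfl hterm, Finset.sum_ite_eq' f.support]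
  split
  · rfl
  · next h => exact (MvPolynomial.notMem_support_iff.mp h).symm

lemma coeff_aevalFin2_CX {F : Type*} [CommRing F] (f : MvPolynomial (Fin 2) F)
    {q : ℕ} (hdeg : f.totalDegree ≤ q - 1) (hq2 : 2 ≤ q) (a : F) :
    (MvPolynomial.aeval
        (fun i : Fin 2 => if i = 0 then Polynomial.C a else (Polynomial.X : Polynomial F)) f).coeff
        (q - 1)
      = coeff (Finsupp.single 1 (q - 1)) f := by
  classical
  set n := q - 1 with hn
  have hn1 : 1 ≤ n := by omega
  rw [aevalFin2_eq, Polynomial.finset_sum_coeff]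
  have hterm : ∀ d ∈ f.support,
      (Polynomial.C (coeff d f) * (Polynomial.C a ^ d 0 * Polynomial.X ^ d 1)).coeff n
        = if d = Finsupp.single 1 n then coeff d f else 0 := by
    intro d hd
    have hre : Polynomial.C (coeff d f) * (Polynomial.C a ^ d 0 * Polynomial.X ^ d 1)
        = Polynomial.C (coeff d f * a ^ d 0) * Polynomial.X ^ d 1 := by
      rw [← Polynomial.C_pow, map_mul]; ring
    rw [hre, Polynomial.coeff_C_mul, Polynomial.coeff_X_pow]
    by_cases hd1 : d 1 = n
    · have hle : d 0 + d 1 ≤ n := by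
        rw [← dsum_fin2]; exact le_trans (le_totalDegree hd) hdeg
      have hd0 : d 0 = 0 := by omega
      have hdeq : d = Finsupp.single 1 n := by
        ext i
        fin_cases i
        · simpa [Finsupp.single_apply] using hd0
        · simpa [Finsupp.single_apply] using hd1
      simp [hdeq, Finsupp.single_apply, hd0]
    · have hne : d ≠ Finsupp.single 1 n := by
        intro h; apply hd1; rw [h]; simp
      have : ¬ (n = d 1) := fun h => hd1 h.symm
      simp [this, hne]
  rw [Finset.sum_congr rfl hterm, Finset.sum_ite_eq' f.support]
  split
  · rfl
  · next h => exact (MvPolynomial.notMem_support_iff.mp h).symm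

/-- A polynomial of total degree at most `q-1` vanishing at all points `(a,b)` with `ab ≠ 0`
is of the form `α(x^(q-1)-1) + β(y^(q-1)-1)`. -/
theorem stmt_1 (F : Type*) [Field F] [Fintype F] (q : ℕ) (hq : Fintype.card F = q)
    (f : MvPolynomial (Fin 2) F) (hdeg : f.totalDegree ≤ q - 1)
    (hf : ∀ a b : F, a ≠ 0 → b ≠ 0 → eval (fun i => if i = 0 then a else b) f = 0) :
    ∃ α β : F, f = C α * ((X 0 : MvPolynomial (Fin 2) F) ^ (q - 1) - 1)
      + C β * ((X 1 : MvPolynomial (Fin 2) F) ^ (q - 1) - 1) := by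
  classical
  have hq2 : 2 ≤ q := by
    have := Fintype.one_lt_card (α := F)
    omega
  set n := q - 1 with hn
  have hn1 : 1 ≤ n := by omega
  have hn0 : n ≠ 0 := by omega
  set α := coeff (Finsupp.single 0 n) f with hα
  set β := coeff (Finsupp.single 1 n) f with hβ
  refine ⟨α, β, ?_⟩
  -- specialization at y = b (b ≠ 0)
  have keyP : ∀ b : F, b ≠ 0 →
      MvPolynomial.aeval
        (fun i : Fin 2 => if i = 0 then (Polynomial.X : Polynomial F) else Polynomial.C b) f
      = Polynomial.C α * (Polynomial.X ^ n - 1) := by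
    intro b hb
    have hcoeff := coeff_aevalFin2_XC f hdeg hq2 b
    have := aux_form hq hq2
      (MvPolynomial.aeval
        (fun i : Fin 2 => if i = 0 then (Polynomial.X : Polynomial F) else Polynomial.C b) f)
      (le_trans (natDegree_aevalFin2_le f _ _ (by simp) (by simp)) hdeg) ?_
    · rw [this, hcoeff]
    · intro a ha
      rw [evalFin2]
      simpa using hf a b ha hb
  -- value of f at (0, b), b ≠ 0
  have h0b : ∀ b : F, b ≠ 0 →
      eval (fun i : Fin 2 => if i = 0 then (0 : F) else b) f = -α := by
    intro b hb
    have h1 := evalFin2 f (Polynomial.X : Polynomial F) (Polynomial.C b) 0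
    rw [keyP b hb] at h1
    have h2 : Polynomial.eval (0:F) (Polynomial.C α * (Polynomial.X ^ n - 1)) = -α := by
      simp [zero_pow hn0]
    rw [h2] at h1
    simpa using h1.symm
  -- specialization at x = a (a ≠ 0)
  have keyQ : ∀ a : F, a ≠ 0 →
      MvPolynomial.aeval
        (fun i : Fin 2 => if i = 0 then Polynomial.C a else (Polynomial.X : Polynomial F)) f
      = Polynomial.C β * (Polynomial.X ^ n - 1) := by
    intro a ha
    have hcoeff := coeff_aevalFin2_CX f hdeg hq2 a
    have := aux_form hq hq2
      (MvPolynomial.aeval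
        (fun i : Fin 2 => if i = 0 then Polynomial.C a else (Polynomial.X : Polynomial F)) f)
      (le_trans (natDegree_aevalFin2_le f _ _ (by simp) (by simp)) hdeg) ?_
    · rw [this, hcoeff]
    · intro b hb
      rw [evalFin2]
      simpa using hf a b ha hb
  -- value of f at (a, 0), a ≠ 0
  have ha0 : ∀ a : F, a ≠ 0 →
      eval (fun i : Fin 2 => if i = 0 then a else (0:F)) f = -β := by
    intro a ha
    have h1 := evalFin2 f (Polynomial.C a) (Polynomial.X : Polynomial F) 0
    rw [keyQ a ha] at h1
    have h2 : Polynomial.eval (0:F) (Polynomial.C β * (Polynomial.X ^ n - 1)) = -β := by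
      simp [zero_pow hn0]
    rw [h2] at h1
    simpa using h1.symm
  -- specialization at x = 0
  have keyQ0 :
      MvPolynomial.aeval
        (fun i : Fin 2 => if i = 0 then Polynomial.C (0:F) else (Polynomial.X : Polynomial F)) f
        + Polynomial.C α
      = Polynomial.C β * (Polynomial.X ^ n - 1) := by
    set Q0 := MvPolynomial.aeval
        (fun i : Fin 2 => if i = 0 then Polynomial.C (0:F) else (Polynomial.X : Polynomial F)) f
      with hQ0def
    have hcoeff : (Q0 + Polynomial.C α).coeff n = β := by
      rw [Polynomial.coeff_add, Polynomial.coeff_C, if_neg hn0, add_zero, hQ0def]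
      exact coeff_aevalFin2_CX f hdeg hq2 0
    have := aux_form hq hq2 (Q0 + Polynomial.C α) ?_ ?_
    · rw [this, hcoeff]
    · refine le_trans (Polynomial.natDegree_add_le _ _) (max_le ?_ ?_)
      · exact le_trans (natDegree_aevalFin2_le f _ _ (by simp) (by simp)) hdeg
      · simp
    · intro b hb
      rw [Polynomial.eval_add, hQ0def, evalFin2]
      have h1 : eval (fun i : Fin 2 =>
          if i = 0 then Polynomial.eval b (Polynomial.C (0:F))
          else Polynomial.eval b (Polynomial.X : Polynomial F)) f = -α := by
        simpa using h0b b hb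
      rw [h1]
      simp
  -- value of f at (0, 0)
  have h00 : eval (fun i : Fin 2 => if i = 0 then (0:F) else (0:F)) f = -β - α := by
    have h1 := evalFin2 f (Polynomial.C (0:F)) (Polynomial.X : Polynomial F) 0
    have h2 : MvPolynomial.aeval
        (fun i : Fin 2 => if i = 0 then Polynomial.C (0:F) else (Polynomial.X : Polynomial F)) f
        = Polynomial.C β * (Polynomial.X ^ n - 1) - Polynomial.C α := by
      rw [← keyQ0]; ring
    rw [h2] at h1
    have h3 : Polynomial.eval (0:F)
        (Polynomial.C β * (Polynomial.X ^ n - 1) - Polynomial.C α) = -β - α := by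
      simp [zero_pow hn0]
    rw [h3] at h1
    simpa using h1.symm
  -- now prove equality of polynomials via all evaluations
  set h : MvPolynomial (Fin 2) F :=
    C α * ((X 0 : MvPolynomial (Fin 2) F) ^ n - 1)
      + C β * ((X 1 : MvPolynomial (Fin 2) F) ^ n - 1) with hhdef
  have hth : h.totalDegree ≤ n := by
    refine le_trans (totalDegree_add _ _) (max_le ?_ ?_) <;>
    · refine le_trans (totalDegree_mul _ _) ?_
      rw [totalDegree_C, zero_add, sub_eq_add_neg]
      refine le_trans (totalDegree_add _ _) (max_le ?_ ?_)
      · exact le_trans (totalDegree_pow _ _) (by simp [totalDegree_X])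
      · rw [totalDegree_neg]; simp
  have heval : ∀ v : Fin 2 → F, eval v h = eval v f := by
    intro v
    have hevh : eval v h = α * ((v 0) ^ n - 1) + β * ((v 1) ^ n - 1) := by
      simp [hhdef]
    rcases eq_or_ne (v 0) 0 with h0 | h0 <;> rcases eq_or_ne (v 1) 0 with h1 | h1
    · have hvf : eval v f = -β - α := by
        rw [show v = (fun i : Fin 2 => if i = 0 then (0:F) else (0:F)) from by
          funext i; fin_cases i <;> simp [h0, h1]]
        exact h00
      rw [hevh, hvf, h0, h1, zero_pow hn0]; ring
    · have hvf : eval v f = -α := by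
        rw [show v = (fun i : Fin 2 => if i = 0 then (0:F) else v 1) from by
          funext i; fin_cases i <;> simp [h0]]
        exact h0b (v 1) h1
      have hp1 : (v 1) ^ n = 1 := by
        rw [hn, ← hq]; exact FiniteField.pow_card_sub_one_eq_one _ h1
      rw [hevh, hvf, h0, zero_pow hn0, hp1]; ring
    · have hvf : eval v f = -β := by
        rw [show v = (fun i : Fin 2 => if i = 0 then v 0 else (0:F)) from by
          funext i; fin_cases i <;> simp [h1]]
        exact ha0 (v 0) h0
      have hp0 : (v 0) ^ n = 1 := by
        rw [hn, ← hq]; exact FiniteField.pow_card_sub_one_eq_one _ h0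
      rw [hevh, hvf, h1, zero_pow hn0, hp0]; ring
    · have hvf : eval v f = 0 := by
        rw [show v = (fun i : Fin 2 => if i = 0 then v 0 else v 1) from by
          funext i; fin_cases i <;> simp]
        exact hf (v 0) (v 1) h0 h1
      have hp0 : (v 0) ^ n = 1 := by
        rw [hn, ← hq]; exact FiniteField.pow_card_sub_one_eq_one _ h0
      have hp1 : (v 1) ^ n = 1 := by
        rw [hn, ← hq]; exact FiniteField.pow_card_sub_one_eq_one _ h1
      rw [hevh, hvf, hp0, hp1]; ring
  -- total degree of the difference
  have htd : (f - h).totalDegree ≤ n := by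
    rw [sub_eq_add_neg]
    refine le_trans (totalDegree_add _ _) (max_le hdeg ?_)
    rw [totalDegree_neg]; exact hth
  -- transfer to ULift to apply eq_zero_of_eval_eq_zero
  have hsub : f - h = 0 := by
    set e : Fin 2 → ULift.{_} (Fin 2) := ULift.up with he
    have hinj : Function.Injective e := fun a b hab => by
      simpa [he] using congrArg ULift.down hab
    have hren : rename e (f - h) = 0 := by
      apply MvPolynomial.eq_zero_of_eval_eq_zero
      · intro v
        rw [eval_rename]
        rw [map_sub, heval (v ∘ e), sub_self]
      · rw [mem_restrictDegree]
        intro s hs i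
        rw [support_rename_of_injective hinj] at hs
        obtain ⟨d, hd, rfl⟩ := Finset.mem_image.mp hs
        have hie : i = e i.down := rfl
        have h1 : Finsupp.mapDomain e d i = d i.down := by
          rw [hie, Finsupp.mapDomain_apply hinj]
        have h2 : d i.down ≤ d.sum fun _ m => m := by
          rw [dsum_fin2]
          have : i.down = 0 ∨ i.down = 1 := by omega
          rcases this with h | h <;> rw [h] <;> omega
        have h3 : (d.sum fun _ m => m) ≤ n := le_trans (le_totalDegree hd) htd
        rw [hq] at *
        omega
    exact (MvPolynomial.rename_injective e hinj) (by simpa using hren)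
  have : f = h := sub_eq_zero.mp hsub
  rw [this]
end

section
/- Let q > 2 be a prime power and α, β, γ ∈ F_q nonzero with α + β + γ = 0. Then the number of F_q-points of the projective plane curve α x₀^(q-1) + β x₁^(q-1) + γ x₂^(q-1) = 0 equals (q-1)². -/
/-- The number of `F_q`-points of the curve `α x₀^(q-1) + β x₁^(q-1) + γ x₂^(q-1) = 0`
(with `αβγ ≠ 0`, `α+β+γ = 0`, `q > 2`) is `(q-1)²`. -/
theorem stmt_4 (F : Type*) [Field F] [Fintype F] (q : ℕ) (hq : Fintype.card F = q)
    (h2 : 2 < q) (α β γ : F) (hα : α ≠ 0) (hβ : β ≠ 0) (hγ : γ ≠ 0) (hsum : α + β + γ = 0) :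
    {P : Projectivization F (Fin 3 → F) |
        α * P.rep 0 ^ (q - 1) + β * P.rep 1 ^ (q - 1) + γ * P.rep 2 ^ (q - 1) = 0}.ncard
      = (q - 1) ^ 2 := by
  classical
  have hq1 : q - 1 ≠ 0 := by omega
  have hpow : ∀ x : F, x ≠ 0 → x ^ (q - 1) = 1 := fun x hx => by
    rw [← hq]; exact FiniteField.pow_card_sub_one_eq_one x hx
  have hzpow : (0 : F) ^ (q - 1) = 0 := zero_pow hq1
  -- The curve consists exactly of points with all coordinates nonzero
  have hset : {P : Projectivization F (Fin 3 → F) |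
        α * P.rep 0 ^ (q - 1) + β * P.rep 1 ^ (q - 1) + γ * P.rep 2 ^ (q - 1) = 0}
      = {P : Projectivization F (Fin 3 → F) |
        P.rep 0 ≠ 0 ∧ P.rep 1 ≠ 0 ∧ P.rep 2 ≠ 0} := by
    ext P
    simp only [Set.mem_setOf_eq]
    constructor
    · intro h
      have hne : P.rep ≠ 0 := P.rep_nonzero
      by_cases h0 : P.rep 0 = 0 <;> by_cases h1 : P.rep 1 = 0 <;>
        by_cases h2' : P.rep 2 = 0
      · exfalso; apply hne; funext i; fin_cases i <;> assumption
      · rw [h0, h1, hpow _ h2', hzpow] at h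
        exact absurd (by linear_combination h) hγ
      · rw [h0, h2', hpow _ h1, hzpow] at h
        exact absurd (by linear_combination h) hβ
      · rw [h0, hpow _ h1, hpow _ h2', hzpow] at h
        exact absurd (by linear_combination hsum - h) hα
      · rw [h1, h2', hpow _ h0, hzpow] at h
        exact absurd (by linear_combination h) hα
      · rw [h1, hpow _ h0, hpow _ h2', hzpow] at h
        exact absurd (by linear_combination hsum - h) hβ
      · rw [h2', hpow _ h0, hpow _ h1, hzpow] at h
        exact absurd (by linear_combination hsum - h) hγ
      · exact ⟨h0, h1, h2'⟩
    · rintro ⟨h0, h1, h2'⟩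
      rw [hpow _ h0, hpow _ h1, hpow _ h2']
      linear_combination hsum
  rw [hset]
  -- Count the points with all coordinates nonzero via a bijection with Fˣ × Fˣ
  set S : Set (Projectivization F (Fin 3 → F)) :=
    {P | P.rep 0 ≠ 0 ∧ P.rep 1 ≠ 0 ∧ P.rep 2 ≠ 0} with hS
  set T : Set (F × F) := {p | p.1 ≠ 0 ∧ p.2 ≠ 0} with hT
  set f : Projectivization F (Fin 3 → F) → F × F :=
    fun P => (P.rep 1 / P.rep 0, P.rep 2 / P.rep 0) with hf
  have hbij : Set.BijOn f S T := by
    refine ⟨fun P hP => ⟨div_ne_zero hP.2.1 hP.1, div_ne_zero hP.2.2 hP.1⟩, ?_, ?_⟩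
    · intro P hP Q hQ hfeq
      obtain ⟨hP0, hP1, hP2⟩ := hP
      obtain ⟨hQ0, hQ1, hQ2⟩ := hQ
      have h1 : P.rep 1 / P.rep 0 = Q.rep 1 / Q.rep 0 := congrArg Prod.fst hfeq
      have h2 : P.rep 2 / P.rep 0 = Q.rep 2 / Q.rep 0 := congrArg Prod.snd hfeq
      rw [div_eq_div_iff hP0 hQ0] at h1 h2
      rw [← P.mk_rep, ← Q.mk_rep, Projectivization.mk_eq_mk_iff]
      refine ⟨Units.mk0 (P.rep 0 / Q.rep 0) (div_ne_zero hP0 hQ0), ?_⟩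
      funext i
      fin_cases i
      · show P.rep 0 / Q.rep 0 * Q.rep 0 = P.rep 0
        exact div_mul_cancel₀ _ hQ0
      · show P.rep 0 / Q.rep 0 * Q.rep 1 = P.rep 1
        rw [div_mul_eq_mul_div, div_eq_iff hQ0]
        linear_combination -h1
      · show P.rep 0 / Q.rep 0 * Q.rep 2 = P.rep 2
        rw [div_mul_eq_mul_div, div_eq_iff hQ0]
        linear_combination -h2
    · rintro ⟨y, z⟩ ⟨hy, hz⟩
      have hv : (![1, y, z] : Fin 3 → F) ≠ 0 := by
        intro h
        have := congrFun h 0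
        simp at this
      set P := Projectivization.mk F ![1, y, z] hv with hP
      obtain ⟨a, ha⟩ := Projectivization.exists_smul_eq_mk_rep F ![1, y, z] hv
      have h0 : P.rep 0 = a * 1 := by rw [← ha]; rfl
      have h1 : P.rep 1 = a * y := by rw [← ha]; rfl
      have h2' : P.rep 2 = a * z := by rw [← ha]; rfl
      have ha0 : (a : F) ≠ 0 := a.ne_zero
      refine ⟨P, ⟨?_, ?_, ?_⟩, ?_⟩
      · rw [h0]; simp [ha0]
      · rw [h1]; exact mul_ne_zero ha0 hy
      · rw [h2']; exact mul_ne_zero ha0 hz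
      · show (P.rep 1 / P.rep 0, P.rep 2 / P.rep 0) = (y, z)
        rw [h0, h1, h2']
        field_simp
  have himg : f '' S = T := hbij.image_eq
  have hScard : S.ncard = T.ncard := by
    rw [← himg, Set.ncard_image_of_injOn hbij.injOn]
  rw [hScard]
  -- Count T
  have hTeq : T = {x : F | x ≠ 0} ×ˢ {x : F | x ≠ 0} := by
    ext ⟨y, z⟩; simp [hT]
  have hcard1 : ({x : F | x ≠ 0} : Set F).ncard = q - 1 := by
    have : ({x : F | x ≠ 0} : Set F) = {(0 : F)}ᶜ := by ext x; simp
    rw [this, Set.ncard_eq_toFinset_card', Set.toFinset_compl, Set.toFinset_singleton,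
      Finset.card_compl, Finset.card_singleton, hq]
  rw [hTeq, Set.ncard_eq_toFinset_card', Set.toFinset_prod, Finset.card_product,
    ← Set.ncard_eq_toFinset_card', hcard1, sq]
end

section
/- Let q > 2 be a prime power, α, β, γ ∈ F_q nonzero with α + β + γ = 0, and C the plane curve α x₀^(q-1) + β x₁^(q-1) + γ x₂^(q-1) = 0 over F_q. For each F_q-line ℓ of P², the cardinality |ℓ ∩ C(F_q)| is either 0, q-2, or q-1. Moreover there are exactly 3 lines meeting C(F_q) in 0 points, exactly (q-1)² lines meeting it in q-2 points, and exactly 3(q-1) lines meeting it in q-1 points. -/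
set_option linter.unusedSectionVars false
set_option maxHeartbeats 1000000

/-- The set of `F_q`-points of the Sziklai curve. -/
def curvePts (F : Type*) [Field F] (q : ℕ) (α β γ : F) :
    Set (Projectivization F (Fin 3 → F)) :=
  {P | α * P.rep 0 ^ (q - 1) + β * P.rep 1 ^ (q - 1) + γ * P.rep 2 ^ (q - 1) = 0}

/-- The set of `F_q`-points of the line whose coefficient vector represents `L`;
lines of `P²` over `F_q` correspond bijectively to points `L` of the dual projective plane. -/
def linePts (F : Type*) [Field F] (L : Projectivization F (Fin 3 → F)) :
    Set (Projectivization F (Fin 3 → F)) :=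
  {P | L.rep 0 * P.rep 0 + L.rep 1 * P.rep 1 + L.rep 2 * P.rep 2 = 0}

namespace SziklaiAux

open Projectivization Set

variable {F : Type*} [Field F] [Fintype F]

instance : Finite (Projectivization F (Fin 3 → F)) := Quotient.finite _

lemma vec_ne_zero {v : Fin 3 → F} (i : Fin 3) (h : v i ≠ 0) : v ≠ 0 :=
  fun H => h (by rw [H]; rfl)

lemma not_all_zero {w : Fin 3 → F} (hw : w ≠ 0) : w 0 ≠ 0 ∨ w 1 ≠ 0 ∨ w 2 ≠ 0 := by
  by_contra h
  push_neg at h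
  exact hw (by funext i; fin_cases i <;> simp [h.1, h.2.1, h.2.2])

lemma rep_mk_coord (v : Fin 3 → F) (hv : v ≠ 0) :
    ∃ t : Fˣ, ∀ i, (Projectivization.mk F v hv).rep i = (t : F) * v i := by
  obtain ⟨a, ha⟩ := Projectivization.exists_smul_eq_mk_rep F v hv
  exact ⟨a, fun i => by rw [← ha]; simp [Units.smul_def]⟩

lemma mk_eq_self (P : Projectivization F (Fin 3 → F)) (v : Fin 3 → F) (hv : v ≠ 0)
    (t : Fˣ) (h : ∀ i, v i = (t : F) * P.rep i) : Projectivization.mk F v hv = P := by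
  conv_rhs => rw [← P.mk_rep]
  rw [Projectivization.mk_eq_mk_iff]
  exact ⟨t, by funext i; simpa [Units.smul_def] using (h i).symm⟩

lemma ncard_ne_zero_one (q : ℕ) (hq : Fintype.card F = q) :
    {x : F | x ≠ 0}.ncard = q - 1 := by
  classical
  have : {x : F | x ≠ 0} = ({0} : Set F)ᶜ := by ext x; simp
  rw [this]
  have h := Set.ncard_add_ncard_compl ({0} : Set F)
  simp only [Set.ncard_singleton, Nat.card_eq_fintype_card, hq] at h
  omega

lemma ncard_ne_zero_two (q : ℕ) (hq : Fintype.card F = q) (d : F) (hd : d ≠ 0) :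
    {x : F | x ≠ 0 ∧ x ≠ d}.ncard = q - 2 := by
  classical
  have : {x : F | x ≠ 0 ∧ x ≠ d} = ({0, d} : Set F)ᶜ := by
    ext x
    simp only [mem_setOf_eq, mem_compl_iff, mem_insert_iff, mem_singleton_iff]
    tauto
  rw [this]
  have h := Set.ncard_add_ncard_compl ({0, d} : Set F)
  rw [Set.ncard_pair (Ne.symm hd), Nat.card_eq_fintype_card, hq] at h
  omega

lemma ncard_prod_ne (q : ℕ) (hq : Fintype.card F = q) :
    {p : F × F | p.1 ≠ 0 ∧ p.2 ≠ 0}.ncard = (q - 1) ^ 2 := by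
  classical
  have h1 : {p : F × F | p.1 ≠ 0 ∧ p.2 ≠ 0} = {x : F | x ≠ 0} ×ˢ {x : F | x ≠ 0} := by
    ext p; simp [Set.mem_prod]
  rw [h1, ← Nat.card_coe_set_eq, Nat.card_congr (Equiv.Set.prod _ _), Nat.card_prod,
    Nat.card_coe_set_eq, ncard_ne_zero_one q hq, sq]

lemma ncard_image_mk {α : Type*} (s : Set α) (v : α → Fin 3 → F) (hv : ∀ x, v x ≠ 0)
    (j : Fin 3) (hj : ∀ x, v x j = 1) (hinj : Function.Injective v) :
    ((fun x => Projectivization.mk F (v x) (hv x)) '' s).ncard = s.ncard := by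
  apply Set.ncard_image_of_injOn
  intro x _ y _ h
  rw [Projectivization.mk_eq_mk_iff] at h
  obtain ⟨u, hu⟩ := h
  have hu' := congrFun hu j
  simp only [Pi.smul_apply, Units.smul_def, smul_eq_mul, hj, mul_one] at hu'
  apply hinj
  rw [← hu]
  funext i
  simp [Units.smul_def, hu']

open scoped Classical in
lemma pow_q (q : ℕ) (hq : Fintype.card F = q) (h2 : 2 < q) (x : F) :
    x ^ (q - 1) = if x = 0 then 0 else 1 := by
  classical
  split_ifs with h
  · rw [h]; exact zero_pow (by omega)
  · rw [← hq]; exact FiniteField.pow_card_sub_one_eq_one x h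

lemma curve_mem_iff (q : ℕ) (hq : Fintype.card F = q) (h2 : 2 < q)
    (α β γ : F) (hα : α ≠ 0) (hβ : β ≠ 0) (hγ : γ ≠ 0) (hsum : α + β + γ = 0)
    (P : Projectivization F (Fin 3 → F)) :
    P ∈ curvePts F q α β γ ↔ P.rep 0 ≠ 0 ∧ P.rep 1 ≠ 0 ∧ P.rep 2 ≠ 0 := by
  classical
  have hne := not_all_zero P.rep_nonzero
  simp only [curvePts, mem_setOf_eq, pow_q q hq h2]
  by_cases h0 : P.rep 0 = 0 <;> by_cases h1 : P.rep 1 = 0 <;> by_cases h2' : P.rep 2 = 0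
  · simp [h0, h1, h2'] at hne
  · simp [h0, h1, h2', hγ]
  · simp [h0, h1, h2', hβ]
  · have hbc : β + γ ≠ 0 := fun h => hα (by linear_combination hsum - h)
    simp [h0, h1, h2', hbc]
  · simp [h0, h1, h2', hα]
  · have hac : α + γ ≠ 0 := fun h => hβ (by linear_combination hsum - h)
    simp [h0, h1, h2', hac]
  · have hab : α + β ≠ 0 := fun h => hγ (by linear_combination hsum - h)
    simp [h0, h1, h2', hab]
  · simp [h0, h1, h2', hsum]


lemma rep_mk_coord' (v : Fin 3 → F) (hv : v ≠ 0) :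
    ∃ t : F, t ≠ 0 ∧ ∀ i, (Projectivization.mk F v hv).rep i = t * v i := by
  obtain ⟨t, ht⟩ := rep_mk_coord v hv
  exact ⟨(t : F), t.ne_zero, ht⟩

lemma mk_eq_self' (P : Projectivization F (Fin 3 → F)) (v : Fin 3 → F) (hv : v ≠ 0)
    (t : F) (ht : t ≠ 0) (h : ∀ i, v i = t * P.rep i) : Projectivization.mk F v hv = P :=
  mk_eq_self P v hv (Units.mk0 t ht) (by simpa using h)

lemma eq_key (a c : F) (ha : a ≠ 0) (x : F) : a * x + c = 0 ↔ x = -(c / a) := by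
  constructor
  · intro h
    linear_combination a⁻¹ * h - x * mul_inv_cancel₀ ha
  · intro h
    rw [h]
    linear_combination (-c) * mul_inv_cancel₀ ha

lemma ncard_affine (q : ℕ) (hq : Fintype.card F = q) (a b c : F)
    (ha : a ≠ 0) (hb : b ≠ 0) (hc : c ≠ 0) :
    {p : F × F | a * p.1 + b * p.2 + c = 0 ∧ p.1 ≠ 0 ∧ p.2 ≠ 0}.ncard = q - 2 := by
  have hd : -(c / a) ≠ 0 := neg_ne_zero.mpr (div_ne_zero hc ha)
  have hset : {p : F × F | a * p.1 + b * p.2 + c = 0 ∧ p.1 ≠ 0 ∧ p.2 ≠ 0} =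
      (fun x : F => (x, -((a * x + c) / b))) '' {x : F | x ≠ 0 ∧ x ≠ -(c / a)} := by
    ext ⟨u, w⟩
    simp only [Set.mem_setOf_eq, Set.mem_image]
    constructor
    · rintro ⟨huw, hu, hw⟩
      refine ⟨u, ⟨hu, ?_⟩, ?_⟩
      · intro h
        rw [← eq_key a c ha u] at h
        exact hw (by linear_combination b⁻¹ * huw - b⁻¹ * h - w * mul_inv_cancel₀ hb)
      · refine Prod.ext rfl ?_
        show -((a * u + c) / b) = w
        linear_combination (-b⁻¹) * huw + w * mul_inv_cancel₀ hb
    · rintro ⟨x, ⟨hx0, hxc⟩, h⟩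
      obtain ⟨rfl, rfl⟩ : x = u ∧ -((a * x + c) / b) = w := ⟨congrArg Prod.fst h, congrArg Prod.snd h⟩
      have haxc : a * x + c ≠ 0 := fun h' => hxc ((eq_key a c ha x).mp h')
      exact ⟨by linear_combination (-(a * x + c)) * mul_inv_cancel₀ hb, hx0,
        neg_ne_zero.mpr (div_ne_zero haxc hb)⟩
  rw [hset, Set.ncard_image_of_injOn (fun x _ y _ h => congrArg Prod.fst h),
    ncard_ne_zero_two q hq _ hd]

section Inter

variable (q : ℕ) (hq : Fintype.card F = q) (h2 : 2 < q) (α β γ : F)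
  (hα : α ≠ 0) (hβ : β ≠ 0) (hγ : γ ≠ 0) (hsum : α + β + γ = 0)

include hq h2 hα hβ hγ hsum

lemma mem_inter_iff (L P : Projectivization F (Fin 3 → F)) :
    P ∈ linePts F L ∩ curvePts F q α β γ ↔
      (L.rep 0 * P.rep 0 + L.rep 1 * P.rep 1 + L.rep 2 * P.rep 2 = 0 ∧
        (P.rep 0 ≠ 0 ∧ P.rep 1 ≠ 0 ∧ P.rep 2 ≠ 0)) := by
  rw [Set.mem_inter_iff, curve_mem_iff q hq h2 α β γ hα hβ hγ hsum]
  exact Iff.rfl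

lemma inter_empty (L : Projectivization F (Fin 3 → F))
    (h : (L.rep 1 = 0 ∧ L.rep 2 = 0) ∨ (L.rep 0 = 0 ∧ L.rep 2 = 0) ∨
      (L.rep 0 = 0 ∧ L.rep 1 = 0)) :
    (linePts F L ∩ curvePts F q α β γ) = ∅ := by
  have hne := not_all_zero L.rep_nonzero
  ext P
  rw [mem_inter_iff q hq h2 α β γ hα hβ hγ hsum]
  simp only [Set.mem_empty_iff_false, iff_false]
  rintro ⟨hl, h0, h1, h2'⟩
  rcases h with ⟨e1, e2⟩ | ⟨e0, e2⟩ | ⟨e0, e1⟩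
  · have ha : L.rep 0 ≠ 0 := by tauto
    rw [e1, e2] at hl
    simp only [zero_mul, add_zero] at hl
    exact (mul_ne_zero ha h0) hl
  · have hb : L.rep 1 ≠ 0 := by tauto
    rw [e0, e2] at hl
    simp only [zero_mul, add_zero, zero_add] at hl
    exact (mul_ne_zero hb h1) hl
  · have hc : L.rep 2 ≠ 0 := by tauto
    rw [e0, e1] at hl
    simp only [zero_mul, add_zero, zero_add] at hl
    exact (mul_ne_zero hc h2') hl

lemma inter_onezero_c (L : Projectivization F (Fin 3 → F))
    (ha : L.rep 0 ≠ 0) (hb : L.rep 1 ≠ 0) (hc : L.rep 2 = 0) :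
    (linePts F L ∩ curvePts F q α β γ).ncard = q - 1 := by
  have hv : ∀ x : F, (![1, -(L.rep 0 / L.rep 1), x] : Fin 3 → F) ≠ 0 :=
    fun x => vec_ne_zero 0 (by simp)
  have hset : linePts F L ∩ curvePts F q α β γ =
      (fun x => Projectivization.mk F ![1, -(L.rep 0 / L.rep 1), x] (hv x)) ''
        {x : F | x ≠ 0} := by
    ext P
    rw [mem_inter_iff q hq h2 α β γ hα hβ hγ hsum]
    constructor
    · rintro ⟨hl, h0, h1, h2'⟩
      rw [hc, zero_mul, add_zero] at hl
      refine ⟨P.rep 2 / P.rep 0, div_ne_zero h2' h0, ?_⟩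
      apply mk_eq_self' P _ _ ((P.rep 0)⁻¹) (inv_ne_zero h0)
      intro i
      fin_cases i
      · show (1 : F) = (P.rep 0)⁻¹ * P.rep 0
        field_simp
      · show -(L.rep 0 / L.rep 1) = (P.rep 0)⁻¹ * P.rep 1
        field_simp
        linear_combination -hl
      · show P.rep 2 / P.rep 0 = (P.rep 0)⁻¹ * P.rep 2
        field_simp
    · rintro ⟨x, hx, rfl⟩
      obtain ⟨t, htne, ht⟩ := rep_mk_coord' (![1, -(L.rep 0 / L.rep 1), x]) (hv x)
      rw [ht 0, ht 1, ht 2]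
      simp only [Matrix.cons_val_zero, Matrix.cons_val_one, Matrix.head_cons, mul_one]
      have e2 : (![1, -(L.rep 0 / L.rep 1), x] : Fin 3 → F) 2 = x := by simp
      rw [e2]
      refine ⟨?_, htne, mul_ne_zero htne (neg_ne_zero.mpr (div_ne_zero ha hb)),
        mul_ne_zero htne hx⟩
      rw [hc]
      field_simp
      ring
  rw [hset, ncard_image_mk _ _ hv 0 (fun x => by simp)
    (fun x y h => by simpa using congrFun h 2), ncard_ne_zero_one q hq]

lemma inter_onezero_b (L : Projectivization F (Fin 3 → F))
    (ha : L.rep 0 ≠ 0) (hb : L.rep 1 = 0) (hc : L.rep 2 ≠ 0) :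
    (linePts F L ∩ curvePts F q α β γ).ncard = q - 1 := by
  have hv : ∀ x : F, (![1, x, -(L.rep 0 / L.rep 2)] : Fin 3 → F) ≠ 0 :=
    fun x => vec_ne_zero 0 (by simp)
  have hset : linePts F L ∩ curvePts F q α β γ =
      (fun x => Projectivization.mk F ![1, x, -(L.rep 0 / L.rep 2)] (hv x)) ''
        {x : F | x ≠ 0} := by
    ext P
    rw [mem_inter_iff q hq h2 α β γ hα hβ hγ hsum]
    constructor
    · rintro ⟨hl, h0, h1, h2'⟩
      rw [hb, zero_mul, add_zero] at hl
      refine ⟨P.rep 1 / P.rep 0, div_ne_zero h1 h0, ?_⟩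
      apply mk_eq_self' P _ _ ((P.rep 0)⁻¹) (inv_ne_zero h0)
      intro i
      fin_cases i
      · show (1 : F) = (P.rep 0)⁻¹ * P.rep 0
        field_simp
      · show P.rep 1 / P.rep 0 = (P.rep 0)⁻¹ * P.rep 1
        field_simp
      · show -(L.rep 0 / L.rep 2) = (P.rep 0)⁻¹ * P.rep 2
        field_simp
        linear_combination -hl
    · rintro ⟨x, hx, rfl⟩
      obtain ⟨t, htne, ht⟩ := rep_mk_coord' (![1, x, -(L.rep 0 / L.rep 2)]) (hv x)
      rw [ht 0, ht 1, ht 2]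
      simp only [Matrix.cons_val_zero, Matrix.cons_val_one, Matrix.head_cons, mul_one]
      have e2 : (![1, x, -(L.rep 0 / L.rep 2)] : Fin 3 → F) 2 = -(L.rep 0 / L.rep 2) := by simp
      rw [e2]
      refine ⟨?_, htne, mul_ne_zero htne hx,
        mul_ne_zero htne (neg_ne_zero.mpr (div_ne_zero ha hc))⟩
      rw [hb]
      field_simp
      ring
  rw [hset, ncard_image_mk _ _ hv 0 (fun x => by simp)
    (fun x y h => by simpa using congrFun h 1), ncard_ne_zero_one q hq]

lemma inter_onezero_a (L : Projectivization F (Fin 3 → F))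
    (ha : L.rep 0 = 0) (hb : L.rep 1 ≠ 0) (hc : L.rep 2 ≠ 0) :
    (linePts F L ∩ curvePts F q α β γ).ncard = q - 1 := by
  have hv : ∀ x : F, (![x, 1, -(L.rep 1 / L.rep 2)] : Fin 3 → F) ≠ 0 :=
    fun x => vec_ne_zero 1 (by simp)
  have hset : linePts F L ∩ curvePts F q α β γ =
      (fun x => Projectivization.mk F ![x, 1, -(L.rep 1 / L.rep 2)] (hv x)) ''
        {x : F | x ≠ 0} := by
    ext P
    rw [mem_inter_iff q hq h2 α β γ hα hβ hγ hsum]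
    constructor
    · rintro ⟨hl, h0, h1, h2'⟩
      rw [ha, zero_mul, zero_add] at hl
      refine ⟨P.rep 0 / P.rep 1, div_ne_zero h0 h1, ?_⟩
      apply mk_eq_self' P _ _ ((P.rep 1)⁻¹) (inv_ne_zero h1)
      intro i
      fin_cases i
      · show P.rep 0 / P.rep 1 = (P.rep 1)⁻¹ * P.rep 0
        field_simp
      · show (1 : F) = (P.rep 1)⁻¹ * P.rep 1
        field_simp
      · show -(L.rep 1 / L.rep 2) = (P.rep 1)⁻¹ * P.rep 2
        field_simp
        linear_combination -hl
    · rintro ⟨x, hx, rfl⟩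
      obtain ⟨t, htne, ht⟩ := rep_mk_coord' (![x, 1, -(L.rep 1 / L.rep 2)]) (hv x)
      rw [ht 0, ht 1, ht 2]
      simp only [Matrix.cons_val_zero, Matrix.cons_val_one, Matrix.head_cons, mul_one]
      have e2 : (![x, 1, -(L.rep 1 / L.rep 2)] : Fin 3 → F) 2 = -(L.rep 1 / L.rep 2) := by simp
      rw [e2]
      refine ⟨?_, mul_ne_zero htne hx, htne,
        mul_ne_zero htne (neg_ne_zero.mpr (div_ne_zero hb hc))⟩
      rw [ha]
      field_simp
      ring
  rw [hset, ncard_image_mk _ _ hv 1 (fun x => by simp)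
    (fun x y h => by simpa using congrFun h 0), ncard_ne_zero_one q hq]

lemma inter_nozero (L : Projectivization F (Fin 3 → F))
    (ha : L.rep 0 ≠ 0) (hb : L.rep 1 ≠ 0) (hc : L.rep 2 ≠ 0) :
    (linePts F L ∩ curvePts F q α β γ).ncard = q - 2 := by
  have hv : ∀ p : F × F, (![p.1, p.2, 1] : Fin 3 → F) ≠ 0 :=
    fun p => vec_ne_zero 2 (by simp)
  have hset : linePts F L ∩ curvePts F q α β γ =
      (fun p => Projectivization.mk F ![p.1, p.2, 1] (hv p)) ''
        {p : F × F | L.rep 0 * p.1 + L.rep 1 * p.2 + L.rep 2 = 0 ∧ p.1 ≠ 0 ∧ p.2 ≠ 0} := by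
    ext P
    rw [mem_inter_iff q hq h2 α β γ hα hβ hγ hsum]
    constructor
    · rintro ⟨hl, h0, h1, h2'⟩
      refine ⟨(P.rep 0 * (P.rep 2)⁻¹, P.rep 1 * (P.rep 2)⁻¹),
        ⟨?_, mul_ne_zero h0 (inv_ne_zero h2'), mul_ne_zero h1 (inv_ne_zero h2')⟩, ?_⟩
      · linear_combination (P.rep 2)⁻¹ * hl - L.rep 2 * mul_inv_cancel₀ h2'
      · apply mk_eq_self' P _ _ ((P.rep 2)⁻¹) (inv_ne_zero h2')
        intro i
        fin_cases i
        · show P.rep 0 * (P.rep 2)⁻¹ = (P.rep 2)⁻¹ * P.rep 0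
          ring
        · show P.rep 1 * (P.rep 2)⁻¹ = (P.rep 2)⁻¹ * P.rep 1
          ring
        · exact (inv_mul_cancel₀ h2').symm
    · rintro ⟨⟨x, y⟩, ⟨hxy, hx, hy⟩, rfl⟩
      obtain ⟨t, htne, ht⟩ := rep_mk_coord' (![(x, y).1, (x, y).2, 1]) (hv (x, y))
      rw [ht 0, ht 1, ht 2]
      simp only [Matrix.cons_val_zero, Matrix.cons_val_one, Matrix.head_cons]
      have e2 : (![(x, y).1, (x, y).2, 1] : Fin 3 → F) 2 = 1 := by simp
      rw [e2, mul_one]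
      exact ⟨by linear_combination t * hxy, mul_ne_zero htne hx, mul_ne_zero htne hy, htne⟩
  rw [hset, ncard_image_mk _ _ hv 2 (fun p => by simp)
    (fun p p' h => Prod.ext (by simpa using congrFun h 0) (by simpa using congrFun h 1)),
    ncard_affine q hq _ _ _ ha hb hc]

end Inter

/-! ### The three coordinate lines -/

variable (F) in
def E0 : Projectivization F (Fin 3 → F) :=
  Projectivization.mk F ![1, 0, 0] (vec_ne_zero 0 (by simp))

variable (F) in
def E1 : Projectivization F (Fin 3 → F) :=
  Projectivization.mk F ![0, 1, 0] (vec_ne_zero 1 (by simp))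

variable (F) in
def E2 : Projectivization F (Fin 3 → F) :=
  Projectivization.mk F ![0, 0, 1] (vec_ne_zero 2 (by simp))

lemma E0_rep : (E0 F).rep 0 ≠ 0 ∧ (E0 F).rep 1 = 0 ∧ (E0 F).rep 2 = 0 := by
  obtain ⟨t, htne, ht⟩ := rep_mk_coord' (![1, 0, 0] : Fin 3 → F) (vec_ne_zero 0 (by simp))
  refine ⟨?_, ?_, ?_⟩ <;> unfold E0 <;> rw [ht] <;> simp [htne]

lemma E1_rep : (E1 F).rep 0 = 0 ∧ (E1 F).rep 1 ≠ 0 ∧ (E1 F).rep 2 = 0 := by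
  obtain ⟨t, htne, ht⟩ := rep_mk_coord' (![0, 1, 0] : Fin 3 → F) (vec_ne_zero 1 (by simp))
  refine ⟨?_, ?_, ?_⟩ <;> unfold E1 <;> rw [ht] <;> simp [htne]

lemma E2_rep : (E2 F).rep 0 = 0 ∧ (E2 F).rep 1 = 0 ∧ (E2 F).rep 2 ≠ 0 := by
  obtain ⟨t, htne, ht⟩ := rep_mk_coord' (![0, 0, 1] : Fin 3 → F) (vec_ne_zero 2 (by simp))
  refine ⟨?_, ?_, ?_⟩ <;> unfold E2 <;> rw [ht] <;> simp [htne]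

lemma E_ne_01 : E0 F ≠ E1 F := by
  intro h
  obtain ⟨u, hu⟩ := (Projectivization.mk_eq_mk_iff F _ _ _ _).mp h
  have := congrFun hu 0
  simp [Units.smul_def] at this

lemma E_ne_02 : E0 F ≠ E2 F := by
  intro h
  obtain ⟨u, hu⟩ := (Projectivization.mk_eq_mk_iff F _ _ _ _).mp h
  have := congrFun hu 0
  simp [Units.smul_def] at this

lemma E_ne_12 : E1 F ≠ E2 F := by
  intro h
  obtain ⟨u, hu⟩ := (Projectivization.mk_eq_mk_iff F _ _ _ _).mp h
  have := congrFun hu 1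
  simp [Units.smul_def] at this

/-- Lines with (at least) two vanishing coefficients are the three coordinate points. -/
lemma twozero_eq :
    {L : Projectivization F (Fin 3 → F) | (L.rep 1 = 0 ∧ L.rep 2 = 0) ∨
      (L.rep 0 = 0 ∧ L.rep 2 = 0) ∨ (L.rep 0 = 0 ∧ L.rep 1 = 0)} =
    {E0 F, E1 F, E2 F} := by
  ext L
  simp only [Set.mem_setOf_eq, Set.mem_insert_iff, Set.mem_singleton_iff]
  constructor
  · intro h
    have hne := not_all_zero L.rep_nonzero
    rcases h with ⟨e1, e2⟩ | ⟨e0, e2⟩ | ⟨e0, e1⟩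
    · have ha : L.rep 0 ≠ 0 := by tauto
      left
      refine (mk_eq_self' L _ _ ((L.rep 0)⁻¹) (inv_ne_zero ha) ?_).symm
      intro i
      fin_cases i
      · exact (inv_mul_cancel₀ ha).symm
      · show (0 : F) = (L.rep 0)⁻¹ * L.rep 1
        rw [e1, mul_zero]
      · show (0 : F) = (L.rep 0)⁻¹ * L.rep 2
        rw [e2, mul_zero]
    · have hb : L.rep 1 ≠ 0 := by tauto
      right; left
      refine (mk_eq_self' L _ _ ((L.rep 1)⁻¹) (inv_ne_zero hb) ?_).symm
      intro i
      fin_cases i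
      · show (0 : F) = (L.rep 1)⁻¹ * L.rep 0
        rw [e0, mul_zero]
      · exact (inv_mul_cancel₀ hb).symm
      · show (0 : F) = (L.rep 1)⁻¹ * L.rep 2
        rw [e2, mul_zero]
    · have hc : L.rep 2 ≠ 0 := by tauto
      right; right
      refine (mk_eq_self' L _ _ ((L.rep 2)⁻¹) (inv_ne_zero hc) ?_).symm
      intro i
      fin_cases i
      · show (0 : F) = (L.rep 2)⁻¹ * L.rep 0
        rw [e0, mul_zero]
      · show (0 : F) = (L.rep 2)⁻¹ * L.rep 1
        rw [e1, mul_zero]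
      · exact (inv_mul_cancel₀ hc).symm
  · rintro (rfl | rfl | rfl)
    · exact Or.inl ⟨E0_rep.2.1, E0_rep.2.2⟩
    · exact Or.inr (Or.inl ⟨E1_rep.1, E1_rep.2.2⟩)
    · exact Or.inr (Or.inr ⟨E2_rep.1, E2_rep.2.1⟩)

lemma ncard_twozero :
    ({E0 F, E1 F, E2 F} : Set (Projectivization F (Fin 3 → F))).ncard = 3 := by
  rw [Set.ncard_insert_of_notMem (by simp [E_ne_01, E_ne_02]),
    Set.ncard_pair E_ne_12]

/-- Lines with nonvanishing coefficients. -/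
lemma ncard_nozero (q : ℕ) (hq : Fintype.card F = q) :
    {L : Projectivization F (Fin 3 → F) |
      L.rep 0 ≠ 0 ∧ L.rep 1 ≠ 0 ∧ L.rep 2 ≠ 0}.ncard = (q - 1) ^ 2 := by
  have hv : ∀ p : F × F, (![p.1, p.2, 1] : Fin 3 → F) ≠ 0 :=
    fun p => vec_ne_zero 2 (by simp)
  have hset : {L : Projectivization F (Fin 3 → F) |
      L.rep 0 ≠ 0 ∧ L.rep 1 ≠ 0 ∧ L.rep 2 ≠ 0} =
      (fun p => Projectivization.mk F ![p.1, p.2, 1] (hv p)) ''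
        {p : F × F | p.1 ≠ 0 ∧ p.2 ≠ 0} := by
    ext L
    simp only [Set.mem_setOf_eq, Set.mem_image]
    constructor
    · rintro ⟨h0, h1, h2'⟩
      refine ⟨(L.rep 0 * (L.rep 2)⁻¹, L.rep 1 * (L.rep 2)⁻¹),
        ⟨mul_ne_zero h0 (inv_ne_zero h2'), mul_ne_zero h1 (inv_ne_zero h2')⟩, ?_⟩
      apply mk_eq_self' L _ _ ((L.rep 2)⁻¹) (inv_ne_zero h2')
      intro i
      fin_cases i
      · show L.rep 0 * (L.rep 2)⁻¹ = (L.rep 2)⁻¹ * L.rep 0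
        ring
      · show L.rep 1 * (L.rep 2)⁻¹ = (L.rep 2)⁻¹ * L.rep 1
        ring
      · exact (inv_mul_cancel₀ h2').symm
    · rintro ⟨⟨x, y⟩, ⟨hx, hy⟩, rfl⟩
      obtain ⟨t, htne, ht⟩ := rep_mk_coord' (![(x, y).1, (x, y).2, 1]) (hv (x, y))
      rw [ht 0, ht 1, ht 2]
      simp only [Matrix.cons_val_zero, Matrix.cons_val_one, Matrix.head_cons]
      have e2 : (![(x, y).1, (x, y).2, 1] : Fin 3 → F) 2 = 1 := by simp
      rw [e2, mul_one]
      exact ⟨mul_ne_zero htne hx, mul_ne_zero htne hy, htne⟩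
  rw [hset, ncard_image_mk _ _ hv 2 (fun p => by simp)
    (fun p p' h => Prod.ext (by simpa using congrFun h 0) (by simpa using congrFun h 1)),
    ncard_prod_ne q hq]

lemma ncard_onezero_c (q : ℕ) (hq : Fintype.card F = q) :
    {L : Projectivization F (Fin 3 → F) |
      L.rep 0 ≠ 0 ∧ L.rep 1 ≠ 0 ∧ L.rep 2 = 0}.ncard = q - 1 := by
  have hv : ∀ x : F, (![x, 1, 0] : Fin 3 → F) ≠ 0 := fun x => vec_ne_zero 1 (by simp)
  have hset : {L : Projectivization F (Fin 3 → F) |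
      L.rep 0 ≠ 0 ∧ L.rep 1 ≠ 0 ∧ L.rep 2 = 0} =
      (fun x => Projectivization.mk F ![x, 1, 0] (hv x)) '' {x : F | x ≠ 0} := by
    ext L
    simp only [Set.mem_setOf_eq, Set.mem_image]
    constructor
    · rintro ⟨h0, h1, h2'⟩
      refine ⟨L.rep 0 * (L.rep 1)⁻¹, mul_ne_zero h0 (inv_ne_zero h1), ?_⟩
      apply mk_eq_self' L _ _ ((L.rep 1)⁻¹) (inv_ne_zero h1)
      intro i
      fin_cases i
      · show L.rep 0 * (L.rep 1)⁻¹ = (L.rep 1)⁻¹ * L.rep 0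
        ring
      · exact (inv_mul_cancel₀ h1).symm
      · show (0 : F) = (L.rep 1)⁻¹ * L.rep 2
        rw [h2', mul_zero]
    · rintro ⟨x, hx, rfl⟩
      obtain ⟨t, htne, ht⟩ := rep_mk_coord' (![x, 1, 0]) (hv x)
      rw [ht 0, ht 1, ht 2]
      simp only [Matrix.cons_val_zero, Matrix.cons_val_one, Matrix.head_cons, mul_one]
      have e2 : (![x, 1, 0] : Fin 3 → F) 2 = 0 := by simp
      rw [e2, mul_zero]
      exact ⟨mul_ne_zero htne hx, htne, by trivial⟩
  rw [hset, ncard_image_mk _ _ hv 1 (fun x => by simp)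
    (fun x y h => by simpa using congrFun h 0), ncard_ne_zero_one q hq]

lemma ncard_onezero_b (q : ℕ) (hq : Fintype.card F = q) :
    {L : Projectivization F (Fin 3 → F) |
      L.rep 0 ≠ 0 ∧ L.rep 1 = 0 ∧ L.rep 2 ≠ 0}.ncard = q - 1 := by
  have hv : ∀ x : F, (![x, 0, 1] : Fin 3 → F) ≠ 0 := fun x => vec_ne_zero 2 (by simp)
  have hset : {L : Projectivization F (Fin 3 → F) |
      L.rep 0 ≠ 0 ∧ L.rep 1 = 0 ∧ L.rep 2 ≠ 0} =
      (fun x => Projectivization.mk F ![x, 0, 1] (hv x)) '' {x : F | x ≠ 0} := by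
    ext L
    simp only [Set.mem_setOf_eq, Set.mem_image]
    constructor
    · rintro ⟨h0, h1, h2'⟩
      refine ⟨L.rep 0 * (L.rep 2)⁻¹, mul_ne_zero h0 (inv_ne_zero h2'), ?_⟩
      apply mk_eq_self' L _ _ ((L.rep 2)⁻¹) (inv_ne_zero h2')
      intro i
      fin_cases i
      · show L.rep 0 * (L.rep 2)⁻¹ = (L.rep 2)⁻¹ * L.rep 0
        ring
      · show (0 : F) = (L.rep 2)⁻¹ * L.rep 1
        rw [h1, mul_zero]
      · exact (inv_mul_cancel₀ h2').symm
    · rintro ⟨x, hx, rfl⟩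
      obtain ⟨t, htne, ht⟩ := rep_mk_coord' (![x, 0, 1]) (hv x)
      rw [ht 0, ht 1, ht 2]
      simp only [Matrix.cons_val_zero, Matrix.cons_val_one, Matrix.head_cons, mul_zero]
      have e2 : (![x, 0, 1] : Fin 3 → F) 2 = 1 := by simp
      rw [e2, mul_one]
      exact ⟨mul_ne_zero htne hx, by trivial, htne⟩
  rw [hset, ncard_image_mk _ _ hv 2 (fun x => by simp)
    (fun x y h => by simpa using congrFun h 0), ncard_ne_zero_one q hq]

lemma ncard_onezero_a (q : ℕ) (hq : Fintype.card F = q) :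
    {L : Projectivization F (Fin 3 → F) |
      L.rep 0 = 0 ∧ L.rep 1 ≠ 0 ∧ L.rep 2 ≠ 0}.ncard = q - 1 := by
  have hv : ∀ x : F, (![0, x, 1] : Fin 3 → F) ≠ 0 := fun x => vec_ne_zero 2 (by simp)
  have hset : {L : Projectivization F (Fin 3 → F) |
      L.rep 0 = 0 ∧ L.rep 1 ≠ 0 ∧ L.rep 2 ≠ 0} =
      (fun x => Projectivization.mk F ![0, x, 1] (hv x)) '' {x : F | x ≠ 0} := by
    ext L
    simp only [Set.mem_setOf_eq, Set.mem_image]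
    constructor
    · rintro ⟨h0, h1, h2'⟩
      refine ⟨L.rep 1 * (L.rep 2)⁻¹, mul_ne_zero h1 (inv_ne_zero h2'), ?_⟩
      apply mk_eq_self' L _ _ ((L.rep 2)⁻¹) (inv_ne_zero h2')
      intro i
      fin_cases i
      · show (0 : F) = (L.rep 2)⁻¹ * L.rep 0
        rw [h0, mul_zero]
      · show L.rep 1 * (L.rep 2)⁻¹ = (L.rep 2)⁻¹ * L.rep 1
        ring
      · exact (inv_mul_cancel₀ h2').symm
    · rintro ⟨x, hx, rfl⟩
      obtain ⟨t, htne, ht⟩ := rep_mk_coord' (![0, x, 1]) (hv x)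
      rw [ht 0, ht 1, ht 2]
      simp only [Matrix.cons_val_zero, Matrix.cons_val_one, Matrix.head_cons, mul_zero]
      have e2 : (![0, x, 1] : Fin 3 → F) 2 = 1 := by simp
      rw [e2, mul_one]
      exact ⟨by trivial, mul_ne_zero htne hx, htne⟩
  rw [hset, ncard_image_mk _ _ hv 2 (fun x => by simp)
    (fun x y h => by simpa using congrFun h 1), ncard_ne_zero_one q hq]

end SziklaiAux

/-- Every `F_q`-line meets the Sziklai curve in `0`, `q-2` or `q-1` rational points, and the
number of lines of each kind is `3`, `(q-1)²` and `3(q-1)` respectively. -/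
theorem stmt_5 (F : Type*) [Field F] [Fintype F] (q : ℕ) (hq : Fintype.card F = q)
    (h2 : 2 < q) (α β γ : F) (hα : α ≠ 0) (hβ : β ≠ 0) (hγ : γ ≠ 0) (hsum : α + β + γ = 0) :
    (∀ L : Projectivization F (Fin 3 → F),
        (linePts F L ∩ curvePts F q α β γ).ncard = 0 ∨
        (linePts F L ∩ curvePts F q α β γ).ncard = q - 2 ∨
        (linePts F L ∩ curvePts F q α β γ).ncard = q - 1) ∧
    {L : Projectivization F (Fin 3 → F) |
        (linePts F L ∩ curvePts F q α β γ).ncard = 0}.ncard = 3 ∧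
    {L : Projectivization F (Fin 3 → F) |
        (linePts F L ∩ curvePts F q α β γ).ncard = q - 2}.ncard = (q - 1) ^ 2 ∧
    {L : Projectivization F (Fin 3 → F) |
        (linePts F L ∩ curvePts F q α β γ).ncard = q - 1}.ncard = 3 * (q - 1) := by
  classical
  open SziklaiAux in
  refine ⟨?_, ?_, ?_, ?_⟩
  · -- part 1
    intro L
    by_cases h0 : L.rep 0 = 0 <;> by_cases h1 : L.rep 1 = 0 <;> by_cases h2' : L.rep 2 = 0
    · have := not_all_zero L.rep_nonzero; tauto
    · left
      rw [inter_empty q hq h2 α β γ hα hβ hγ hsum L (Or.inr (Or.inr ⟨h0, h1⟩))]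
      exact Set.ncard_empty _
    · left
      rw [inter_empty q hq h2 α β γ hα hβ hγ hsum L (Or.inr (Or.inl ⟨h0, h2'⟩))]
      exact Set.ncard_empty _
    · exact Or.inr (Or.inr (inter_onezero_a q hq h2 α β γ hα hβ hγ hsum L h0 h1 h2'))
    · left
      rw [inter_empty q hq h2 α β γ hα hβ hγ hsum L (Or.inl ⟨h1, h2'⟩)]
      exact Set.ncard_empty _
    · exact Or.inr (Or.inr (inter_onezero_b q hq h2 α β γ hα hβ hγ hsum L h0 h1 h2'))
    · exact Or.inr (Or.inr (inter_onezero_c q hq h2 α β γ hα hβ hγ hsum L h0 h1 h2'))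
    · exact Or.inr (Or.inl (inter_nozero q hq h2 α β γ hα hβ hγ hsum L h0 h1 h2'))
  · -- 3 lines missing the curve
    have hset : {L : Projectivization F (Fin 3 → F) |
        (linePts F L ∩ curvePts F q α β γ).ncard = 0} = {E0 F, E1 F, E2 F} := by
      rw [← twozero_eq]
      ext L
      simp only [Set.mem_setOf_eq]
      constructor
      · intro h
        by_cases h0 : L.rep 0 = 0 <;> by_cases h1 : L.rep 1 = 0 <;>
          by_cases h2' : L.rep 2 = 0
        · have := not_all_zero L.rep_nonzero; tauto
        · tauto
        · tauto
        · rw [inter_onezero_a q hq h2 α β γ hα hβ hγ hsum L h0 h1 h2'] at h; omega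
        · tauto
        · rw [inter_onezero_b q hq h2 α β γ hα hβ hγ hsum L h0 h1 h2'] at h; omega
        · rw [inter_onezero_c q hq h2 α β γ hα hβ hγ hsum L h0 h1 h2'] at h; omega
        · rw [inter_nozero q hq h2 α β γ hα hβ hγ hsum L h0 h1 h2'] at h; omega
      · intro h
        rw [inter_empty q hq h2 α β γ hα hβ hγ hsum L h]
        exact Set.ncard_empty _
    rw [hset]
    exact ncard_twozero
  · -- (q-1)^2 lines meeting in q-2 points
    have hset : {L : Projectivization F (Fin 3 → F) |
        (linePts F L ∩ curvePts F q α β γ).ncard = q - 2} =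
        {L : Projectivization F (Fin 3 → F) |
          L.rep 0 ≠ 0 ∧ L.rep 1 ≠ 0 ∧ L.rep 2 ≠ 0} := by
      ext L
      simp only [Set.mem_setOf_eq]
      constructor
      · intro h
        by_cases h0 : L.rep 0 = 0 <;> by_cases h1 : L.rep 1 = 0 <;>
          by_cases h2' : L.rep 2 = 0
        · have := not_all_zero L.rep_nonzero; tauto
        · rw [inter_empty q hq h2 α β γ hα hβ hγ hsum L (Or.inr (Or.inr ⟨h0, h1⟩)),
            Set.ncard_empty] at h; omega
        · rw [inter_empty q hq h2 α β γ hα hβ hγ hsum L (Or.inr (Or.inl ⟨h0, h2'⟩)),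
            Set.ncard_empty] at h; omega
        · rw [inter_onezero_a q hq h2 α β γ hα hβ hγ hsum L h0 h1 h2'] at h; omega
        · rw [inter_empty q hq h2 α β γ hα hβ hγ hsum L (Or.inl ⟨h1, h2'⟩),
            Set.ncard_empty] at h; omega
        · rw [inter_onezero_b q hq h2 α β γ hα hβ hγ hsum L h0 h1 h2'] at h; omega
        · rw [inter_onezero_c q hq h2 α β γ hα hβ hγ hsum L h0 h1 h2'] at h; omega
        · exact ⟨h0, h1, h2'⟩
      · rintro ⟨h0, h1, h2'⟩
        exact inter_nozero q hq h2 α β γ hα hβ hγ hsum L h0 h1 h2'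
    rw [hset]
    exact ncard_nozero q hq
  · -- 3(q-1) lines meeting in q-1 points
    have hset : {L : Projectivization F (Fin 3 → F) |
        (linePts F L ∩ curvePts F q α β γ).ncard = q - 1} =
        ({L : Projectivization F (Fin 3 → F) |
            L.rep 0 = 0 ∧ L.rep 1 ≠ 0 ∧ L.rep 2 ≠ 0} ∪
         {L : Projectivization F (Fin 3 → F) |
            L.rep 0 ≠ 0 ∧ L.rep 1 = 0 ∧ L.rep 2 ≠ 0}) ∪
        {L : Projectivization F (Fin 3 → F) |
            L.rep 0 ≠ 0 ∧ L.rep 1 ≠ 0 ∧ L.rep 2 = 0} := by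
      ext L
      simp only [Set.mem_setOf_eq, Set.mem_union]
      constructor
      · intro h
        by_cases h0 : L.rep 0 = 0 <;> by_cases h1 : L.rep 1 = 0 <;>
          by_cases h2' : L.rep 2 = 0
        · have := not_all_zero L.rep_nonzero; tauto
        · rw [inter_empty q hq h2 α β γ hα hβ hγ hsum L (Or.inr (Or.inr ⟨h0, h1⟩)),
            Set.ncard_empty] at h; omega
        · rw [inter_empty q hq h2 α β γ hα hβ hγ hsum L (Or.inr (Or.inl ⟨h0, h2'⟩)),
            Set.ncard_empty] at h; omega
        · tauto
        · rw [inter_empty q hq h2 α β γ hα hβ hγ hsum L (Or.inl ⟨h1, h2'⟩),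
            Set.ncard_empty] at h; omega
        · tauto
        · tauto
        · rw [inter_nozero q hq h2 α β γ hα hβ hγ hsum L h0 h1 h2'] at h; omega
      · rintro ((⟨h0, h1, h2'⟩ | ⟨h0, h1, h2'⟩) | ⟨h0, h1, h2'⟩)
        · exact inter_onezero_a q hq h2 α β γ hα hβ hγ hsum L h0 h1 h2'
        · exact inter_onezero_b q hq h2 α β γ hα hβ hγ hsum L h0 h1 h2'
        · exact inter_onezero_c q hq h2 α β γ hα hβ hγ hsum L h0 h1 h2'
    rw [hset]
    rw [Set.ncard_union_eq (by
      rw [Set.disjoint_left]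
      rintro L (⟨h0, h1, h2'⟩ | ⟨h0, h1, h2'⟩) ⟨g0, g1, g2⟩ <;> tauto)]
    rw [Set.ncard_union_eq (by
      rw [Set.disjoint_left]
      rintro L ⟨h0, h1, h2'⟩ ⟨g0, g1, g2⟩ <;> tauto)]
    rw [ncard_onezero_a q hq, ncard_onezero_b q hq, ncard_onezero_c q hq]
    ring
end

section
/- Let q > 2 be a prime power, and let C be a (possibly reducible) plane curve over F_q of degree q-1 whose set of F_q-points equals P²(F_q) minus the union of the three coordinate lines. Then the homogeneous defining polynomial of C is, up to a nonzero scalar, of the form α x₀^(q-1) + β x₁^(q-1) + γ x₂^(q-1) with α, β, γ ∈ F_q all nonzero and α + β + γ = 0. -/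
/-!
Write `n = q - 1` and let `aᵢ` be the coefficient of `Xᵢⁿ` in `f`. The difference
`g = f - ∑ aᵢ Xᵢⁿ` is homogeneous of degree `n` without pure powers, so it has degree `< n` in
every variable. On the torus `(F_q^×)³` we have `xᵢⁿ = 1`, hence `g = -∑ aᵢ` there; since the
torus is a grid with sides of size `n`, the combinatorial Nullstellensatz gives `g = -∑ aᵢ` as
polynomials, and comparing constant terms shows `∑ aᵢ = 0`. Finally `aₖ = f(eₖ) ≠ 0` because the
coordinate points lie off the torus.
-/

open MvPolynomial

namespace MvPolynomial.IsHomogeneous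

theorem eval_smul {R σ : Type*} [CommSemiring R] {φ : MvPolynomial σ R} {n : ℕ}
    (hφ : φ.IsHomogeneous n) (c : R) (x : σ → R) :
    eval (c • x) φ = c ^ n * eval x φ := by
  simp only [eval_eq, Finset.mul_sum]
  refine Finset.sum_congr rfl fun d hd => ?_
  rw [hφ.degree_eq_sum_deg_support hd, ← Finset.prod_pow_eq_pow_sum]
  simp only [Pi.smul_apply, smul_eq_mul, mul_pow, Finset.prod_mul_distrib]
  ring

theorem eval_smul_eq_zero_iff {K σ : Type*} [Field K] {φ : MvPolynomial σ K} {n : ℕ}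
    (hφ : φ.IsHomogeneous n) {c : K} (hc : c ≠ 0) (x : σ → K) :
    eval (c • x) φ = 0 ↔ eval x φ = 0 := by
  rw [hφ.eval_smul, mul_eq_zero, or_iff_right (pow_ne_zero _ hc)]

theorem degreeOf_lt_of_coeff_single_eq_zero {R σ : Type*} [CommSemiring R]
    {φ : MvPolynomial σ R} {n : ℕ} (hφ : φ.IsHomogeneous n) (hn : n ≠ 0) {k : σ}
    (hk : coeff (Finsupp.single k n) φ = 0) : φ.degreeOf k < n := by
  rw [degreeOf_lt_iff (Nat.pos_of_ne_zero hn)]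
  intro d hd
  have hdeg : d.degree = n := by
    simpa [Finsupp.degree_eq_weight_one, Pi.one_def] using hφ (mem_support_iff.mp hd)
  refine ((Finsupp.le_degree k d).trans_eq hdeg).lt_of_ne fun hdk => mem_support_iff.mp hd ?_
  have herase : d.erase k = 0 := by
    rw [← Finsupp.degree_eq_zero_iff]
    have := congrArg Finsupp.degree (Finsupp.single_add_erase k d)
    rw [map_add, Finsupp.degree_single] at this
    omega
  rwa [← Finsupp.single_add_erase k d, herase, add_zero, hdk]

theorem exists_eq_sum_C_mul_X_pow_of_eval_eq_zero_on_units
    {F σ : Type*} [Field F] [Fintype F] [Fintype σ] {φ : MvPolynomial σ F}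
    (hφ : φ.IsHomogeneous (Fintype.card F - 1))
    (hφ0 : ∀ x : σ → F, (∀ i, x i ≠ 0) → eval x φ = 0) :
    ∃ a : σ → F, φ = ∑ i, C (a i) * X i ^ (Fintype.card F - 1) ∧ ∑ i, a i = 0 := by
  classical
  set n := Fintype.card F - 1
  have hn : n ≠ 0 := Nat.sub_ne_zero_of_lt Fintype.one_lt_card
  set a : σ → F := fun i => coeff (Finsupp.single i n) φ
  set g := φ - ∑ i, C (a i) * X i ^ n
  have hg : g.IsHomogeneous n :=
    hφ.sub (IsHomogeneous.sum _ _ _ fun i _ => isHomogeneous_C_mul_X_pow (a i) i n)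
  have hg_single (k : σ) : coeff (Finsupp.single k n) g = 0 := by
    simp [g, a, coeff_sum, coeff_C_mul, coeff_X_pow, Finsupp.single_left_inj hn]
  have hg_const : g + C (∑ i, a i) = 0 := by
    refine eq_zero_of_eval_zero_at_prod_finset _ (fun _ => Finset.univ.erase 0) (fun k => ?_)
      fun x hx => ?_
    · rw [Finset.card_erase_of_mem (Finset.mem_univ _), Finset.card_univ]
      refine (degreeOf_add_le k _ _).trans_lt (max_lt (hg.degreeOf_lt_of_coeff_single_eq_zero hn
        (hg_single k)) ?_)
      rw [degreeOf_C]
      exact Nat.pos_of_ne_zero hn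
    · have hx0 i : x i ≠ 0 := Finset.ne_of_mem_erase (hx i)
      simp [g, hφ0 x hx0, FiniteField.pow_card_sub_one_eq_one _ (hx0 _), n]
  have hsum : ∑ i, a i = 0 := by
    have := congrArg (coeff 0) hg_const
    rwa [coeff_add, hg.coeff_eq_zero (by simpa using hn.symm), coeff_zero_C, zero_add] at this
  refine ⟨a, ?_, hsum⟩
  rwa [hsum, map_zero, add_zero, sub_eq_zero] at hg_const

end MvPolynomial.IsHomogeneous

theorem stmt_6_general (F : Type*) [Field F] [Fintype F] (q : ℕ) (hq : Fintype.card F = q)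
    (f : MvPolynomial (Fin 3) F)
    (hhom : f.IsHomogeneous (q - 1))
    (hzero : ∀ P : Projectivization F (Fin 3 → F),
        eval P.rep f = 0 ↔ (P.rep 0 ≠ 0 ∧ P.rep 1 ≠ 0 ∧ P.rep 2 ≠ 0)) :
    ∃ α β γ : F, α ≠ 0 ∧ β ≠ 0 ∧ γ ≠ 0 ∧ α + β + γ = 0 ∧
      f = C α * (X 0 : MvPolynomial (Fin 3) F) ^ (q - 1)
        + C β * (X 1 : MvPolynomial (Fin 3) F) ^ (q - 1)
        + C γ * (X 2 : MvPolynomial (Fin 3) F) ^ (q - 1) := by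
  subst hq
  have hzero_affine (x : Fin 3 → F) (hx : x ≠ 0) : eval x f = 0 ↔ x 0 ≠ 0 ∧ x 1 ≠ 0 ∧ x 2 ≠ 0 := by
    obtain ⟨c, hc⟩ := Projectivization.exists_smul_eq_mk_rep F x hx
    have := hzero (Projectivization.mk F x hx)
    rw [← hc, Units.smul_def, hhom.eval_smul_eq_zero_iff c.ne_zero] at this
    simpa [c.ne_zero] using this
  obtain ⟨a, hf, hsum⟩ := hhom.exists_eq_sum_C_mul_X_pow_of_eval_eq_zero_on_units fun x hx =>
    (hzero_affine x fun h => hx 0 (congrFun h 0)).2 ⟨hx 0, hx 1, hx 2⟩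
  have ha (k : Fin 3) : a k ≠ 0 := by
    have hn : Fintype.card F - 1 ≠ 0 := Nat.sub_ne_zero_of_lt Fintype.one_lt_card
    have heval : eval (Pi.single k 1) f = a k := by
      simp [hf, Pi.single_apply, hn]
    rw [← heval, Ne, hzero_affine _ (by simp)]
    fin_cases k <;> simp
  rw [Fin.sum_univ_three] at hf hsum
  exact ⟨a 0, a 1, a 2, ha 0, ha 1, ha 2, hsum, hf⟩

/-- A plane curve over `F_q` of degree `q-1` whose `F_q`-points are exactly the complement of
the three coordinate lines is defined by `α x₀^(q-1) + β x₁^(q-1) + γ x₂^(q-1) = 0` with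
`αβγ ≠ 0` and `α + β + γ = 0` (up to a nonzero scalar, which can be absorbed into `α,β,γ`). -/
theorem stmt_6 (F : Type*) [Field F] [Fintype F] (q : ℕ) (hq : Fintype.card F = q)
    (h2 : 2 < q) (f : MvPolynomial (Fin 3) F) (hf0 : f ≠ 0)
    (hhom : f.IsHomogeneous (q - 1))
    (hzero : ∀ P : Projectivization F (Fin 3 → F),
        eval P.rep f = 0 ↔ (P.rep 0 ≠ 0 ∧ P.rep 1 ≠ 0 ∧ P.rep 2 ≠ 0)) :
    ∃ α β γ : F, α ≠ 0 ∧ β ≠ 0 ∧ γ ≠ 0 ∧ α + β + γ = 0 ∧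
      f = C α * (X 0 : MvPolynomial (Fin 3) F) ^ (q - 1)
        + C β * (X 1 : MvPolynomial (Fin 3) F) ^ (q - 1)
        + C γ * (X 2 : MvPolynomial (Fin 3) F) ^ (q - 1) :=
  stmt_6_general F q hq f hhom hzero
end

section
/- Let q = 2^(2s) for s ≥ 1. The number of orbits of the symmetric group S₃ acting on the set {(α : β) ∈ P¹(F_q) : α ≠ 0, β ≠ 0, α + β ≠ 0}, where the action is generated by (α : β) ↦ (β : α) and (α : β) ↦ (α : α + β), equals (q+2)/6. -/
/-- The set `{(α, β) : αβ(α+β) ≠ 0}`, whose classes up to scalar form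
`{(α : β) ∈ P¹(F_q) : α ≠ 0, β ≠ 0, α + β ≠ 0}`. -/
def goodPairs2 (F : Type*) [Field F] : Type _ :=
  {p : F × F // p.1 ≠ 0 ∧ p.2 ≠ 0 ∧ p.1 + p.2 ≠ 0}

/-- Orbit relation on projective classes of good pairs under the `S₃`-action generated by
`(α : β) ↦ (β : α)` and `(α : β) ↦ (α : α + β)` (char 2, so `-(α+β) = α+β`):
two pairs are related iff one is a nonzero scalar multiple of one of the six
images `(α,β), (β,α), (α,α+β), (α+β,β), (α+β,α), (β,α+β)` of the other. -/
def relS3char2 (F : Type*) [Field F] (p q : goodPairs2 F) : Prop :=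
  ∃ l : F, l ≠ 0 ∧ (
    q.1 = (l * p.1.1, l * p.1.2) ∨
    q.1 = (l * p.1.2, l * p.1.1) ∨
    q.1 = (l * p.1.1, l * (p.1.1 + p.1.2)) ∨
    q.1 = (l * (p.1.1 + p.1.2), l * p.1.2) ∨
    q.1 = (l * (p.1.1 + p.1.2), l * p.1.1) ∨
    q.1 = (l * p.1.2, l * (p.1.1 + p.1.2)))


/-! The affine coordinate `x = α / β` identifies the set with `F ∖ {0, 1}`, and the six maps
become the anharmonic group `{x, x⁻¹, 1 - x, (1 - x)⁻¹, x / (x - 1), (x - 1) / x}` (in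
characteristic 2, `α + β = α - β`). Its orbits are exactly the fibres of Legendre's
`j`-invariant `(x² - x + 1)³ / (x² (x - 1)²)`, by a factorisation of the numerator of
`j(y) - j(x)`. In characteristic 2 an orbit has six elements unless `x² + x + 1 = 0`; since
`3 ∣ q - 1`, that equation has its two roots in `F_q`, which form one orbit of size 2.
Hence `q - 2 = 6 (N - 1) + 2` for the number `N` of orbits. -/

open Finset

lemma card_quot_eq_card_range {α β : Type*} {r : α → α → Prop} (f : α → β)
    (hr : ∀ a b, r a b ↔ f a = f b) : Nat.card (Quot r) = Nat.card (Set.range f) :=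
  Nat.card_congr ((Quot.congrRight hr).trans (Setoid.quotientKerEquivRange f))

lemma exists_sq_add_self_add_one_eq_zero (F : Type*) [Field F] [Fintype F]
    (h3 : 3 ∣ Fintype.card F - 1) : ∃ ω : F, ω ^ 2 + ω + 1 = 0 := by
  classical
  have : Fact (Nat.Prime 3) := ⟨Nat.prime_three⟩
  obtain ⟨u, hu⟩ := exists_prime_orderOf_dvd_card (G := Fˣ) 3 (by rwa [Fintype.card_units])
  have hu3 : (u : F) ^ 3 = 1 := by
    rw [← Units.val_pow_eq_pow_val, ← hu, pow_orderOf_eq_one, Units.val_one]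
  have hu1 : (u : F) - 1 ≠ 0 := by
    rw [sub_ne_zero, Ne, Units.val_eq_one]
    rintro rfl
    simp at hu
  exact ⟨u, (mul_eq_zero.mp (by linear_combination hu3 : ((u : F) - 1) * _ = 0)).resolve_left hu1⟩

section Anharmonic

variable {F : Type*} [Field F]

/-- Legendre's `j`-invariant of `λ`, without its factor `256`. -/
noncomputable def jInvariant (x : F) : F := (x ^ 2 - x + 1) ^ 3 / (x ^ 2 * (x - 1) ^ 2)

/-- The orbit of `x` under the group generated by `x ↦ x⁻¹` and `x ↦ 1 - x`, listed in the
order of the six images in `relS3char2`. -/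
def anharmonicOrbit [DecidableEq F] (x : F) : Finset F :=
  {x, x⁻¹, x / (x - 1), 1 - x, (x - 1) / x, (1 - x)⁻¹}

lemma jInvariant_inv (x : F) : jInvariant x⁻¹ = jInvariant x := by
  rcases eq_or_ne x 0 with rfl | hx
  · rw [inv_zero]
  · simp only [jInvariant]
    field_simp
    ring

lemma jInvariant_one_sub (x : F) : jInvariant (1 - x) = jInvariant x := by
  simp only [jInvariant]
  ring

lemma jInvariant_eq_zero_iff {x : F} (hx0 : x ≠ 0) (hx1 : x ≠ 1) :
    jInvariant x = 0 ↔ x ^ 2 - x + 1 = 0 := by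
  have hden : x ^ 2 * (x - 1) ^ 2 ≠ 0 := by simp [hx0, sub_ne_zero.mpr hx1]
  rw [jInvariant, div_eq_zero_iff, or_iff_left hden, pow_eq_zero_iff three_ne_zero]

lemma jInvariant_numerator_sub_eq (x y : F) :
    (y ^ 2 - y + 1) ^ 3 * (x ^ 2 * (x - 1) ^ 2) - (x ^ 2 - x + 1) ^ 3 * (y ^ 2 * (y - 1) ^ 2) =
      (y - x) * (x * y - 1) * ((x - 1) * y - x) * (y + x - 1) * (x * y - x + 1) *
        ((x - 1) * y + 1) := by
  ring

lemma mem_anharmonicOrbit_iff [DecidableEq F] {x y : F} (hx0 : x ≠ 0) (hx1 : x ≠ 1) :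
    y ∈ anharmonicOrbit x ↔ y ≠ 0 ∧ y ≠ 1 ∧ jInvariant y = jInvariant x := by
  have hx1' : x - 1 ≠ 0 := sub_ne_zero.mpr hx1
  constructor
  · have h1 : x / (x - 1) = 1 - (1 - x)⁻¹ := by field_simp; ring
    have h2 : (x - 1) / x = 1 - x⁻¹ := by field_simp
    simp only [anharmonicOrbit, mem_insert, mem_singleton]
    rintro (rfl | rfl | rfl | rfl | rfl | rfl) <;>
      simp only [h1, h2, jInvariant_inv, jInvariant_one_sub, and_true] <;> grind
  · rintro ⟨hy0, hy1, hj⟩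
    have hy1' : y - 1 ≠ 0 := sub_ne_zero.mpr hy1
    rw [jInvariant, jInvariant, div_eq_div_iff (by positivity) (by positivity), ← sub_eq_zero,
      jInvariant_numerator_sub_eq] at hj
    simp only [anharmonicOrbit, mem_insert, mem_singleton, mul_eq_zero] at hj ⊢
    rcases hj with (((((h | h) | h) | h) | h) | h)
    · exact Or.inl (sub_eq_zero.mp h)
    · exact Or.inr <| Or.inl <| eq_inv_of_mul_eq_one_right (sub_eq_zero.mp h)
    · exact Or.inr <| Or.inr <| Or.inl <| by field_simp; linear_combination h
    · exact Or.inr <| Or.inr <| Or.inr <| Or.inl <| by linear_combination h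
    · exact Or.inr <| Or.inr <| Or.inr <| Or.inr <| Or.inl <| by field_simp; linear_combination h
    · exact Or.inr <| Or.inr <| Or.inr <| Or.inr <| Or.inr <| eq_inv_of_mul_eq_one_right <| by
        linear_combination -h

lemma exists_mul_pair_eq_iff {a b : F} (hb : b ≠ 0) {v : F × F} (hv : v.2 ≠ 0) :
    (∃ l, l ≠ 0 ∧ v = (l * a, l * b)) ↔ v.1 / v.2 = a / b := by
  constructor
  · rintro ⟨l, hl, rfl⟩
    exact mul_div_mul_left a b hl
  · intro h
    refine ⟨v.2 / b, div_ne_zero hv hb, Prod.ext ?_ ?_⟩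
    · field_simp at h ⊢
      linear_combination h
    · field_simp

def goodPairs2.ratio (p : goodPairs2 F) : F := p.1.1 / p.1.2

lemma goodPairs2.ratio_ne_zero (p : goodPairs2 F) : p.ratio ≠ 0 := div_ne_zero p.2.1 p.2.2.1

end Anharmonic

section CharTwo

variable {F : Type*} [Field F] [CharP F 2]

lemma card_anharmonicOrbit [DecidableEq F] {x : F} (hx0 : x ≠ 0) (hx1 : x ≠ 1) :
    #(anharmonicOrbit x) = if x ^ 2 - x + 1 = 0 then 2 else 6 := by
  have hx1' : x - 1 ≠ 0 := sub_ne_zero.mpr hx1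
  split_ifs with hω
  · have : anharmonicOrbit x = {x, 1 - x} := by
      have h1 : x⁻¹ = 1 - x := by field_simp; grind
      have h2 : x / (x - 1) = 1 - x := by field_simp; grind
      have h3 : (x - 1) / x = x := by field_simp; grind
      have h4 : (1 - x)⁻¹ = x := by rw [← h1, inv_inv]
      simp only [anharmonicOrbit, h1, h2, h3, h4]
      grind
    rw [this, card_pair]
    grind
  · simp only [anharmonicOrbit]
    repeat rw [card_insert_of_notMem (by simp only [mem_insert, mem_singleton]; grind)]
    rfl

namespace goodPairs2

lemma ratio_ne_one (p : goodPairs2 F) : p.ratio ≠ 1 := by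
  rw [ratio, Ne, div_eq_one_iff_eq p.2.2.1, ← CharTwo.add_eq_zero]
  exact p.2.2.2

lemma relS3char2_iff_mem_anharmonicOrbit [DecidableEq F] {p q : goodPairs2 F} :
    relS3char2 F p q ↔ q.ratio ∈ anharmonicOrbit p.ratio := by
  obtain ⟨⟨α, β⟩, hα, hβ, hαβ⟩ := p
  have hq := q.2.2.1
  simp only [relS3char2, and_or_left, exists_or, exists_mul_pair_eq_iff hα hq,
    exists_mul_pair_eq_iff hβ hq, exists_mul_pair_eq_iff hαβ hq, ratio, anharmonicOrbit,
    mem_insert, mem_singleton]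
  rw [inv_div, div_sub_one hβ, one_sub_div hβ, div_div_div_cancel_right₀ hβ, inv_div,
    div_div_div_cancel_right₀ hβ, CharTwo.sub_eq_add, CharTwo.sub_eq_add, add_comm β]

lemma relS3char2_iff_jInvariant_eq {p q : goodPairs2 F} :
    relS3char2 F p q ↔ jInvariant p.ratio = jInvariant q.ratio := by
  classical
  rw [relS3char2_iff_mem_anharmonicOrbit, mem_anharmonicOrbit_iff p.ratio_ne_zero p.ratio_ne_one,
    eq_comm, ← and_assoc]
  exact and_iff_right ⟨q.ratio_ne_zero, q.ratio_ne_one⟩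

end goodPairs2

variable [Fintype F] [DecidableEq F]

lemma range_jInvariant_ratio :
    Set.range (fun p : goodPairs2 F => jInvariant p.ratio) =
      ↑(({0, 1} : Finset F)ᶜ.image jInvariant) := by
  ext b
  simp only [Set.mem_range, coe_image, Set.mem_image, coe_compl, Set.mem_compl_iff, coe_insert,
    coe_singleton, Set.mem_insert_iff, Set.mem_singleton_iff, not_or]
  constructor
  · rintro ⟨p, rfl⟩
    exact ⟨p.ratio, ⟨p.ratio_ne_zero, p.ratio_ne_one⟩, rfl⟩
  · rintro ⟨x, ⟨hx0, hx1⟩, rfl⟩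
    refine ⟨⟨(x, 1), hx0, one_ne_zero, fun h => hx1 (CharTwo.add_eq_zero.mp h)⟩, ?_⟩
    simp [goodPairs2.ratio]

lemma six_mul_card_image_jInvariant (hω : ∃ ω : F, ω ^ 2 - ω + 1 = 0) :
    6 * #(({0, 1} : Finset F)ᶜ.image jInvariant) = Fintype.card F + 2 := by
  set X : Finset F := {0, 1}ᶜ
  have hX {x : F} : x ∈ X ↔ x ≠ 0 ∧ x ≠ 1 := by simp [X]
  have hfiber : ∀ b ∈ X.image jInvariant,
      #{x ∈ X | jInvariant x = b} = if b = 0 then 2 else 6 := by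
    simp only [mem_image]
    rintro _ ⟨x, hx, rfl⟩
    obtain ⟨hx0, hx1⟩ := hX.mp hx
    have : {y ∈ X | jInvariant y = jInvariant x} = anharmonicOrbit x := by
      ext y
      rw [mem_filter, hX, mem_anharmonicOrbit_iff hx0 hx1, and_assoc]
    simp only [this, card_anharmonicOrbit hx0 hx1, jInvariant_eq_zero_iff hx0 hx1]
  have hzero : 0 ∈ X.image jInvariant := by
    obtain ⟨ω, hω⟩ := hω
    have hω0 : ω ≠ 0 := by rintro rfl; norm_num at hω
    have hω1 : ω ≠ 1 := by rintro rfl; norm_num at hω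
    exact mem_image.mpr ⟨ω, hX.mpr ⟨hω0, hω1⟩, (jInvariant_eq_zero_iff hω0 hω1).mpr hω⟩
  have hcardX : #X + 2 = Fintype.card F := by
    have := Fintype.one_lt_card (α := F)
    rw [card_compl, card_pair zero_ne_one]
    omega
  have hsum := card_eq_sum_card_image jInvariant X
  rw [sum_congr rfl hfiber, ← add_sum_erase _ _ hzero, if_pos rfl,
    sum_congr rfl fun b hb => if_neg (ne_of_mem_erase hb), sum_const, smul_eq_mul] at hsum
  have := card_erase_add_one hzero
  omega

end CharTwo

theorem stmt_9_general (F : Type*) [Field F] [Fintype F] (s : ℕ)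
    (hq : Fintype.card F = 2 ^ (2 * s)) :
    6 * Nat.card (Quot (relS3char2 F)) = 2 ^ (2 * s) + 2 := by
  classical
  have h2 : (2 : F) = 0 := by
    have h := FiniteField.cast_card_eq_zero F
    rw [hq, Nat.cast_pow, Nat.cast_ofNat] at h
    exact eq_zero_of_pow_eq_zero h
  have : CharP F 2 := CharTwo.of_one_ne_zero_of_two_eq_zero one_ne_zero h2
  obtain ⟨ω, hω⟩ := exists_sq_add_self_add_one_eq_zero F <| by
    simpa [hq, pow_mul] using Nat.sub_dvd_pow_sub_pow 4 1 s
  rw [card_quot_eq_card_range _ fun _ _ => goodPairs2.relS3char2_iff_jInvariant_eq,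
    range_jInvariant_ratio, Nat.card_coe_set_eq, Set.ncard_coe_finset,
    six_mul_card_image_jInvariant ⟨ω, by rwa [CharTwo.sub_eq_add]⟩, hq]

/-- For `q = 2^(2s)` the number of orbits of `S₃` on
`{(α : β) ∈ P¹(F_q) : α ≠ 0, β ≠ 0, α + β ≠ 0}` is `(q+2)/6`. -/
theorem stmt_9 (F : Type*) [Field F] [Fintype F] (s : ℕ) (hs : 1 ≤ s)
    (hq : Fintype.card F = 2 ^ (2 * s)) :
    6 * Nat.card (Quot (relS3char2 F)) = 2 ^ (2 * s) + 2 :=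
  stmt_9_general F s hq
end

section
/- Let F_4 = F_2[ω] with ω² + ω + 1 = 0, and let x, y be elements of an F_4-algebra satisfying x³ + y³ + 1 = 0, with y + 1 and x + y + 1 invertible. Define u = 1 + x/(y+1) + 1/(x+y+1), v = ω²·x/(y+1) + 1/(x+y+1), w = ω·x/(y+1) + 1/(x+y+1). Then u³ + ω v³ + ω² w³ = 0. -/
/-- In any commutative `F₄`-algebra (`F₄ = F₂[ω]`, `ω² + ω + 1 = 0`), if `x³ + y³ + 1 = 0`
and `y + 1`, `x + y + 1` are invertible, then with
`u = 1 + x/(y+1) + 1/(x+y+1)`, `v = ω²x/(y+1) + 1/(x+y+1)`, `w = ωx/(y+1) + 1/(x+y+1)`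
we have `u³ + ωv³ + ω²w³ = 0`. -/
theorem stmt_18 (A : Type*) [CommRing A] [Algebra (GaloisField 2 2) A]
    (ω : GaloisField 2 2) (hω : ω ^ 2 + ω + 1 = 0)
    (x y a b : A)
    (hxy : x ^ 3 + y ^ 3 + 1 = 0)
    (ha : (y + 1) * a = 1) (hb : (x + y + 1) * b = 1) :
    (1 + x * a + b) ^ 3
      + algebraMap (GaloisField 2 2) A ω * (algebraMap (GaloisField 2 2) A (ω ^ 2) * x * a + b) ^ 3
      + algebraMap (GaloisField 2 2) A (ω ^ 2) * (algebraMap (GaloisField 2 2) A ω * x * a + b) ^ 3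
      = 0 := by
  have h2' : (2 : GaloisField 2 2) = 0 := by
    have := CharP.cast_eq_zero (GaloisField 2 2) 2
    exact_mod_cast this
  have h2 : (2 : A) = 0 := by
    have := congrArg (algebraMap (GaloisField 2 2) A) h2'
    rw [map_ofNat] at this; simpa using this
  set W : A := algebraMap (GaloisField 2 2) A ω with hWdef
  have hWA : W ^ 2 + W + 1 = 0 := by
    have := congrArg (algebraMap (GaloisField 2 2) A) hω
    simpa [map_add, map_pow, map_one] using this
  rw [map_pow]
  linear_combination (a^2*b + a^3 + a^3*W^5 + a^3*W^7)*hxy + (W^5 + W^7 + b*W^4 + b*W^5 + b^2 + a + a^2 + a^2*W^5 + a^2*W^7 + y*a*W^5 + y*a*W^7 + y*a*b + y*a^2 + y*a^2*W^5 + y*a^2*W^7 + y^2*a^2 + y^2*a^2*W^5 + y^2*a^2*W^7 + x*a + x*a*b + x*a*b*W^4 + x*a*b*W^5)*ha + (a + a*W^4 + a*W^5 + a*b + a^2 + y^2*a^2 + x*a^2*W^4 + x*a^2*W^5 + x*y*a^2 + x^2*a^2)*hb + (1 + W + W^3 + W^4 + W^5 + b + b*W + b*W^3 + b^3 + a*W^4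 + a*W^5 + a^2 + a^2*W + a^2*W^3 + a^2*W^4 + a^2*W^5 + x*a^2 + x*a^2*W + x*a^2*W^3)*hWA + (- W - W^2 - W^3 - W^4 - W^5 - W^6 + b - b*W - b*W^2 - b*W^3 + 2*b^2 + a - a*W^5 - a*W^6 - a*W^7 - a*b*W^4 - a*b*W^5 - a*b^2 - a^2*W - a^2*W^2 - a^2*W^3 - a^2*W^4 - a^2*W^5 - a^2*W^6 - a^2*b - a^3 - a^3*W^5 - a^3*W^7 - y*a*b*W^4 - y*a*b*W^5 - y*a*b^2 - y*a^2*b - y*a^3 - y*a^3*W^5 - y*a^3*W^7 + y^2*a^2 - y^2*a^2*b - y^2*a^3 - y^2*a^3*W^5 - y^2*a^3*W^7 - y^3*a^2*b - y^3*a^3 - y^3*a^3*W^5 - y^3*a^3*W^7 + 2*x*a + 3*x*a*b + x*a*b^2 + 3*x*a*b^2*W^3 - x*a^2 - x*a^2*W - x*a^2*W^2 - x*a^2*W^3 - x*a^2*b - x*a^2*b*W^4 - x*a^2*b*W^5 - x*y*a^2*b - x*y*a^2*b*W^4 - x*y*a^2*b*W^5 - x*y^2*a^2*b + 2*x^2*a^2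 + x^2*a^2*b + x^2*a^2*b*W^4 + x^2*a^2*b*W^5 - x^2*y*a^2*b - x^3*a^2*b)*h2
end
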